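/- arXiv:1103.5862 — 2 statements merged into one kernel-verified Lean document; each statement's English description precedes it below -/
import Mathlib

section
/- Let Σ be a submanifold of (M,η) with an almost Kähler–Poisson structure of characteristic function γ², and define B_A^{ij} = −γ² ∇̂^i N_A^j. Then for every X ∈ TΣ it holds that η(B_A(N_B), X) = −γ² (D_X)_{AB}, where the coefficients (D_X)_{AB} of the normal connection are defined through D_X N_A = (D_X)_{AB} N_B. -/
open scoped BigOperators

namespace KP

/-- Partial derivative of a real-valued function on `ℝ^k` in the `a`-th coordinate
direction. -/
noncomputable def pd {k : ℕ} (a : Fin k) (f : (Fin k → ℝ) → ℝ) (p : Fin k → ℝ) : ℝ :=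
  fderiv ℝ f p (Pi.single a 1)

variable {n m : ℕ}

/-- The Poisson bracket `{f,g} = θ^{ab} (∂_a f)(∂_b g)` associated to a bivector `θ`. -/
noncomputable def pbr (θ : (Fin n → ℝ) → Fin n → Fin n → ℝ)
    (f g : (Fin n → ℝ) → ℝ) (p : Fin n → ℝ) : ℝ :=
  ∑ a, ∑ b, θ p a b * pd a f p * pd b g p

/-- Antisymmetry of a bivector. -/
def Antisymm (θ : (Fin n → ℝ) → Fin n → Fin n → ℝ) : Prop :=
  ∀ p a b, θ p a b = - θ p b a

/-- The Jacobi identity for a bivector `θ` (so that `θ` is a Poisson bivector). -/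
def JacobiId (θ : (Fin n → ℝ) → Fin n → Fin n → ℝ) : Prop :=
  ∀ p a b c, ∑ d, (θ p a d * pd d (fun q => θ q b c) p
    + θ p b d * pd d (fun q => θ q c a) p
    + θ p c d * pd d (fun q => θ q a b) p) = 0

/-- Smoothness of a field with two indices. -/
def Smooth2 {k l k' : ℕ} (f : (Fin k → ℝ) → Fin l → Fin k' → ℝ) : Prop :=
  ∀ i j, ContDiff ℝ (⊤ : ℕ∞) fun q => f q i j

/-- A Riemannian metric `g` in local coordinates, with given inverse `gi`:
smoothness, symmetry, positive definiteness and the inverse property. -/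
def IsMetric {k : ℕ} (g gi : (Fin k → ℝ) → Fin k → Fin k → ℝ) : Prop :=
  Smooth2 g ∧
  (∀ q i j, g q i j = g q j i) ∧
  (∀ (q : Fin k → ℝ) (v : Fin k → ℝ), v ≠ 0 → 0 < ∑ i, ∑ j, g q i j * v i * v j) ∧
  (∀ q i j, (∑ l, g q i l * gi q l j) = if i = j then (1:ℝ) else 0)

/-- Christoffel symbols `Γ^a_{bc}` of the Levi-Civita connection of the metric `g`
(with inverse `gi`). -/
noncomputable def Chr {k : ℕ} (g gi : (Fin k → ℝ) → Fin k → Fin k → ℝ)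
    (q : Fin k → ℝ) (a b c : Fin k) : ℝ :=
  (1/2) * ∑ d, gi q a d *
    (pd b (fun r => g r d c) q + pd c (fun r => g r d b) q - pd d (fun r => g r b c) q)

/-- The Riemann curvature tensor `R^a_{bcd}` of the Levi-Civita connection of `g`,
with the convention `R(e_c, e_d) e_b = R^a_{bcd} e_a`. -/
noncomputable def Riem {k : ℕ} (g gi : (Fin k → ℝ) → Fin k → Fin k → ℝ)
    (q : Fin k → ℝ) (a b c d : Fin k) : ℝ :=
  pd c (fun r => Chr g gi r a d b) q - pd d (fun r => Chr g gi r a c b) q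
  + ∑ e, (Chr g gi q a c e * Chr g gi q e d b - Chr g gi q a d e * Chr g gi q e c b)

/-- The fully lowered curvature tensor `R_{abcd} = g_{ae} R^e_{bcd}`, so that
`R(X,Y,Z,V) = g(R(Z,V)Y, X) = R_{abcd} X^a Y^b Z^c V^d`. -/
noncomputable def RiemL {k : ℕ} (g gi : (Fin k → ℝ) → Fin k → Fin k → ℝ)
    (q : Fin k → ℝ) (a b c d : Fin k) : ℝ :=
  ∑ e, g q a e * Riem g gi q e b c d

/-- The induced metric `g_{ab} = η_{ij} (∂_a x^i)(∂_b x^j)` on the submanifold `Σ`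
embedded via `x` in `(M,η)`. -/
noncomputable def ind (η : (Fin m → ℝ) → Fin m → Fin m → ℝ)
    (x : (Fin n → ℝ) → Fin m → ℝ) (p : Fin n → ℝ) (a b : Fin n) : ℝ :=
  ∑ i, ∑ j, η (x p) i j * pd a (fun q => x q i) p * pd b (fun q => x q j) p

/-- Smoothness of the embedding. -/
def SmoothEmb (x : (Fin n → ℝ) → Fin m → ℝ) : Prop :=
  ∀ i, ContDiff ℝ (⊤ : ℕ∞) fun q => x q i

/-- `θ` is an almost Kähler–Poisson structure on `Σ` (with induced metric of inverse
`gi`) with characteristic function `γ2`:  `θ` is a smooth Poisson bivector, `γ2` is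
smooth and strictly positive, and `γ² g^{ab} = θ^{ap} θ^{bq} g_{pq}`. -/
def IsAKP (η : (Fin m → ℝ) → Fin m → Fin m → ℝ) (x : (Fin n → ℝ) → Fin m → ℝ)
    (θ : (Fin n → ℝ) → Fin n → Fin n → ℝ) (γ2 : (Fin n → ℝ) → ℝ)
    (gi : (Fin n → ℝ) → Fin n → Fin n → ℝ) : Prop :=
  Antisymm θ ∧ JacobiId θ ∧ Smooth2 θ ∧ Smooth2 gi ∧
  ContDiff ℝ (⊤ : ℕ∞) γ2 ∧ (∀ p, 0 < γ2 p) ∧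
  (∀ p a b, (∑ c, ind η x p a c * gi p c b) = if a = b then (1:ℝ) else 0) ∧
  (∀ p a b, γ2 p * gi p a b = ∑ c, ∑ d, θ p a c * θ p b d * ind η x p c d)

/-- `P^{ij} = {x^i, x^j}`. -/
noncomputable def Pbig (x : (Fin n → ℝ) → Fin m → ℝ)
    (θ : (Fin n → ℝ) → Fin n → Fin n → ℝ) (p : Fin n → ℝ) (i j : Fin m) : ℝ :=
  pbr θ (fun q => x q i) (fun q => x q j) p

/-- The map `P : TM → TM`, `P(X)^i = P^{ij} η_{jk} X^k`. -/
noncomputable def Pmap (η : (Fin m → ℝ) → Fin m → Fin m → ℝ)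
    (x : (Fin n → ℝ) → Fin m → ℝ) (θ : (Fin n → ℝ) → Fin n → Fin n → ℝ)
    (p : Fin n → ℝ) (X : Fin m → ℝ) (i : Fin m) : ℝ :=
  ∑ j, ∑ k, Pbig x θ p i j * η (x p) j k * X k

/-- `D^i(u) = γ^{-2} {u, x^k}{x^i, x^l} η_{kl}`. -/
noncomputable def Dop (η : (Fin m → ℝ) → Fin m → Fin m → ℝ)
    (x : (Fin n → ℝ) → Fin m → ℝ) (θ : (Fin n → ℝ) → Fin n → Fin n → ℝ)
    (γ2 : (Fin n → ℝ) → ℝ) (u : (Fin n → ℝ) → ℝ) (p : Fin n → ℝ) (i : Fin m) : ℝ :=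
  (γ2 p)⁻¹ * ∑ k, ∑ l, pbr θ u (fun q => x q k) p
    * pbr θ (fun q => x q i) (fun q => x q l) p * η (x p) k l

/-- `D^{ik} = D^i(x^k)`. -/
noncomputable def Dmat (η : (Fin m → ℝ) → Fin m → Fin m → ℝ)
    (x : (Fin n → ℝ) → Fin m → ℝ) (θ : (Fin n → ℝ) → Fin n → Fin n → ℝ)
    (γ2 : (Fin n → ℝ) → ℝ) (p : Fin n → ℝ) (i k : Fin m) : ℝ :=
  Dop η x θ γ2 (fun q => x q k) p i

/-- `Π^{ij} = η^{ij} − D^{ij}`, the projection onto the normal space. -/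
noncomputable def PiU (η ηi : (Fin m → ℝ) → Fin m → Fin m → ℝ)
    (x : (Fin n → ℝ) → Fin m → ℝ) (θ : (Fin n → ℝ) → Fin n → Fin n → ℝ)
    (γ2 : (Fin n → ℝ) → ℝ) (p : Fin n → ℝ) (i j : Fin m) : ℝ :=
  ηi (x p) i j - Dmat η x θ γ2 p i j

/-- The lowered projection `Π_{ij} = η_{ij} − D_{ij}`. -/
noncomputable def PiL (η : (Fin m → ℝ) → Fin m → Fin m → ℝ)
    (x : (Fin n → ℝ) → Fin m → ℝ) (θ : (Fin n → ℝ) → Fin n → Fin n → ℝ)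
    (γ2 : (Fin n → ℝ) → ℝ) (p : Fin n → ℝ) (i j : Fin m) : ℝ :=
  η (x p) i j - ∑ k, ∑ l, η (x p) i k * η (x p) j l * Dmat η x θ γ2 p k l

/-- The ambient components `X^i = c^a ∂_a x^i` of the tangent field with coefficient
functions `c`. -/
noncomputable def tv (x : (Fin n → ℝ) → Fin m → ℝ) (c : (Fin n → ℝ) → Fin n → ℝ)
    (p : Fin n → ℝ) (i : Fin m) : ℝ :=
  ∑ a, c p a * pd a (fun q => x q i) p

/-- Lowering an ambient index along `Σ` : `V_i = η_{ij} V^j`. -/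
noncomputable def low (η : (Fin m → ℝ) → Fin m → Fin m → ℝ)
    (x : (Fin n → ℝ) → Fin m → ℝ) (V : (Fin n → ℝ) → Fin m → ℝ)
    (p : Fin n → ℝ) (i : Fin m) : ℝ :=
  ∑ j, η (x p) i j * V p j

/-- The ambient inner product `η(V,W)` along `Σ`. -/
noncomputable def ipM (η : (Fin m → ℝ) → Fin m → Fin m → ℝ)
    (x : (Fin n → ℝ) → Fin m → ℝ) (V W : (Fin n → ℝ) → Fin m → ℝ)
    (p : Fin n → ℝ) : ℝ :=
  ∑ i, ∑ j, η (x p) i j * V p i * W p j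

/-- The ambient covariant derivative `(∇̄_{e_a} V)^i` of an ambient-vector field `V`
along `Σ`. -/
noncomputable def barD (η ηi : (Fin m → ℝ) → Fin m → Fin m → ℝ)
    (x : (Fin n → ℝ) → Fin m → ℝ) (V : (Fin n → ℝ) → Fin m → ℝ)
    (p : Fin n → ℝ) (a : Fin n) (i : Fin m) : ℝ :=
  pd a (fun q => V q i) p
    + ∑ k, ∑ l, Chr η ηi (x p) i k l * pd a (fun q => x q k) p * V p l

/-- `∇̂^i u = D^i(u)` on scalars. -/
noncomputable def nhS (η : (Fin m → ℝ) → Fin m → Fin m → ℝ)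
    (x : (Fin n → ℝ) → Fin m → ℝ) (θ : (Fin n → ℝ) → Fin n → Fin n → ℝ)
    (γ2 : (Fin n → ℝ) → ℝ) (u : (Fin n → ℝ) → ℝ) (p : Fin n → ℝ) (i : Fin m) : ℝ :=
  Dop η x θ γ2 u p i

/-- `∇̂^i V^j = D^i(V^j) + D^{ik} Γ̄^j_{kl} V^l` for ambient-vector fields `V` along `Σ`. -/
noncomputable def nhV (η ηi : (Fin m → ℝ) → Fin m → Fin m → ℝ)
    (x : (Fin n → ℝ) → Fin m → ℝ) (θ : (Fin n → ℝ) → Fin n → Fin n → ℝ)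
    (γ2 : (Fin n → ℝ) → ℝ) (V : (Fin n → ℝ) → Fin m → ℝ)
    (p : Fin n → ℝ) (i j : Fin m) : ℝ :=
  Dop η x θ γ2 (fun q => V q j) p i
    + ∑ k, ∑ l, Dmat η x θ γ2 p i k * Chr η ηi (x p) j k l * V p l

/-- `∇̂^i T^{jk}` for `2`-contravariant tensor fields `T` along `Σ`. -/
noncomputable def nhT2 (η ηi : (Fin m → ℝ) → Fin m → Fin m → ℝ)
    (x : (Fin n → ℝ) → Fin m → ℝ) (θ : (Fin n → ℝ) → Fin n → Fin n → ℝ)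
    (γ2 : (Fin n → ℝ) → ℝ) (T : (Fin n → ℝ) → Fin m → Fin m → ℝ)
    (p : Fin n → ℝ) (i j k : Fin m) : ℝ :=
  Dop η x θ γ2 (fun q => T q j k) p i
    + ∑ l, ∑ l', Dmat η x θ γ2 p i l * Chr η ηi (x p) j l l' * T p l' k
    + ∑ l, ∑ l', Dmat η x θ γ2 p i l * Chr η ηi (x p) k l l' * T p j l'

/-- `∇̂^i T_{jk}` for `2`-covariant tensor fields `T` along `Σ`. -/
noncomputable def nhT02 (η ηi : (Fin m → ℝ) → Fin m → Fin m → ℝ)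
    (x : (Fin n → ℝ) → Fin m → ℝ) (θ : (Fin n → ℝ) → Fin n → Fin n → ℝ)
    (γ2 : (Fin n → ℝ) → ℝ) (T : (Fin n → ℝ) → Fin m → Fin m → ℝ)
    (p : Fin n → ℝ) (i j k : Fin m) : ℝ :=
  Dop η x θ γ2 (fun q => T q j k) p i
    - ∑ l, ∑ l', Dmat η x θ γ2 p i l * Chr η ηi (x p) l' l j * T p l' k
    - ∑ l, ∑ l', Dmat η x θ γ2 p i l * Chr η ηi (x p) l' l k * T p j l'

/-- The second fundamental form `α(X,Y) = Π(∇̂_X Y)` (ambient components) for tangent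
fields with coefficients `c`, `d`. -/
noncomputable def sff (η ηi : (Fin m → ℝ) → Fin m → Fin m → ℝ)
    (x : (Fin n → ℝ) → Fin m → ℝ) (θ : (Fin n → ℝ) → Fin n → Fin n → ℝ)
    (γ2 : (Fin n → ℝ) → ℝ) (c d : (Fin n → ℝ) → Fin n → ℝ)
    (p : Fin n → ℝ) (i : Fin m) : ℝ :=
  ∑ j, ((if i = j then (1:ℝ) else 0) - ∑ k, Dmat η x θ γ2 p i k * η (x p) k j)
    * (∑ a, c p a * barD η ηi x (tv x d) p a j)

/-- `B_A^{ij} = −γ² ∇̂^i N_A^j`. -/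
noncomputable def Bmap (η ηi : (Fin m → ℝ) → Fin m → Fin m → ℝ)
    (x : (Fin n → ℝ) → Fin m → ℝ) (θ : (Fin n → ℝ) → Fin n → Fin n → ℝ)
    (γ2 : (Fin n → ℝ) → ℝ) (N : (Fin n → ℝ) → Fin m → ℝ)
    (p : Fin n → ℝ) (i j : Fin m) : ℝ :=
  - γ2 p * nhV η ηi x θ γ2 N p i j

/-- `N` is a smooth orthonormal frame of the normal bundle `TΣ^⊥` :
each `N_A` is a smooth unit normal field, they are mutually orthonormal, and they
are complete, i.e. `Σ_A N_A^i N_A^j = η^{ij} − D^{ij} = Π^{ij}`. -/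
def NormalFrame {r : ℕ} (η ηi : (Fin m → ℝ) → Fin m → Fin m → ℝ)
    (x : (Fin n → ℝ) → Fin m → ℝ) (θ : (Fin n → ℝ) → Fin n → Fin n → ℝ)
    (γ2 : (Fin n → ℝ) → ℝ) (N : Fin r → (Fin n → ℝ) → Fin m → ℝ) : Prop :=
  (∀ A i, ContDiff ℝ (⊤ : ℕ∞) fun q => N A q i) ∧
  (∀ A B p, ipM η x (N A) (N B) p = if A = B then (1:ℝ) else 0) ∧
  (∀ A p a, (∑ i, ∑ j, η (x p) i j * N A p i * pd a (fun q => x q j) p) = 0) ∧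
  (∀ p i j, (∑ A, N A p i * N A p j) = PiU η ηi x θ γ2 p i j)



section Helpers
variable {ι₁ ι₂ ι₃ ι₄ ι₅ ι₆ : Type*} [Fintype ι₁] [Fintype ι₂] [Fintype ι₃] [Fintype ι₄]
  [Fintype ι₅] [Fintype ι₆]

lemma sum_push2 (f : ι₁ → ι₂ → ι₃ → ℝ) :
    ∑ k : ι₁, ∑ a : ι₂, ∑ b : ι₃, f k a b = ∑ a, ∑ b, ∑ k, f k a b := by
  rw [Finset.sum_comm]
  exact Finset.sum_congr rfl fun a _ => Finset.sum_comm

lemma sum_push3 (f : ι₁ → ι₂ → ι₃ → ι₄ → ℝ) :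
    ∑ k : ι₁, ∑ a : ι₂, ∑ b : ι₃, ∑ c : ι₄, f k a b c = ∑ a, ∑ b, ∑ c, ∑ k, f k a b c := by
  rw [Finset.sum_comm]
  refine Finset.sum_congr rfl fun a _ => ?_
  rw [Finset.sum_comm]
  exact Finset.sum_congr rfl fun b _ => Finset.sum_comm

lemma sum_push4 (f : ι₁ → ι₂ → ι₃ → ι₄ → ι₅ → ℝ) :
    ∑ k : ι₁, ∑ a : ι₂, ∑ b : ι₃, ∑ c : ι₄, ∑ d : ι₅, f k a b c d
      = ∑ a, ∑ b, ∑ c, ∑ d, ∑ k, f k a b c d := by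
  rw [Finset.sum_comm]
  refine Finset.sum_congr rfl fun a _ => ?_
  rw [Finset.sum_comm]
  refine Finset.sum_congr rfl fun b _ => ?_
  rw [Finset.sum_comm]
  exact Finset.sum_congr rfl fun c _ => Finset.sum_comm

lemma mul_sum2 (r : ℝ) (t : ι₁ → ι₂ → ℝ) :
    r * ∑ j, ∑ k, t j k = ∑ j, ∑ k, r * t j k := by
  simp [Finset.mul_sum]

end Helpers

lemma sum_reorder6 {α β : Type*} [Fintype α] [Fintype β] (f : β → β → α → α → α → α → ℝ) :
    ∑ k : β, ∑ l : β, ∑ a : α, ∑ b : α, ∑ c : α, ∑ d : α, f k l a b c d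
      = ∑ a, ∑ c, ∑ b, ∑ d, ∑ k, ∑ l, f k l a b c d :=
  calc ∑ k : β, ∑ l : β, ∑ a : α, ∑ b : α, ∑ c : α, ∑ d : α, f k l a b c d
      = ∑ k : β, ∑ a, ∑ b, ∑ c, ∑ d, ∑ l, f k l a b c d :=
        Finset.sum_congr rfl fun k _ => sum_push4 (fun l a b c d => f k l a b c d)
    _ = ∑ a, ∑ b, ∑ c, ∑ d, ∑ k, ∑ l, f k l a b c d :=
        sum_push4 (fun k a b c d => ∑ l, f k l a b c d)
    _ = ∑ a, ∑ c, ∑ b, ∑ d, ∑ k, ∑ l, f k l a b c d :=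
        Finset.sum_congr rfl fun a _ => Finset.sum_comm

lemma sum_contract {n m : ℕ} (θ : Fin n → Fin n → ℝ) (uA : Fin n → ℝ)
    (E : Fin n → Fin m → ℝ) (Ei : Fin n → ℝ) (H : Fin m → Fin m → ℝ) :
    ∑ k, ∑ l, (∑ a, ∑ b, θ a b * uA a * E b k) * (∑ c, ∑ d, θ c d * Ei c * E d l) * H k l
      = ∑ a, ∑ c, (∑ b, ∑ d, θ a b * θ c d * (∑ k, ∑ l, H k l * E b k * E d l)) * uA a * Ei c := by
  calc ∑ k, ∑ l, (∑ a, ∑ b, θ a b * uA a * E b k) * (∑ c, ∑ d, θ c d * Ei c * E d l) * H k l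
      = ∑ k, ∑ l, ∑ a, ∑ b, ∑ c, ∑ d,
          θ a b * uA a * E b k * (θ c d * Ei c * E d l) * H k l := by
        refine Finset.sum_congr rfl fun k _ => Finset.sum_congr rfl fun l _ => ?_
        simp only [Finset.sum_mul, Finset.mul_sum]
        exact (sum_push3 _).trans (sum_push3 _)
    _ = ∑ a, ∑ c, ∑ b, ∑ d, ∑ k, ∑ l,
          θ a b * uA a * E b k * (θ c d * Ei c * E d l) * H k l :=
        sum_reorder6 _
    _ = ∑ a, ∑ c, (∑ b, ∑ d, θ a b * θ c d * (∑ k, ∑ l, H k l * E b k * E d l)) * uA a * Ei c := by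
        refine Finset.sum_congr rfl fun a _ => Finset.sum_congr rfl fun c _ => ?_
        simp only [Finset.sum_mul, Finset.mul_sum]
        refine Finset.sum_congr rfl fun b _ => Finset.sum_congr rfl fun d _ =>
          Finset.sum_congr rfl fun k _ => Finset.sum_congr rfl fun l _ => by ring


lemma Dop_eq {n m : ℕ} (η : (Fin m → ℝ) → Fin m → Fin m → ℝ) (x : (Fin n → ℝ) → Fin m → ℝ)
    (θ : (Fin n → ℝ) → Fin n → Fin n → ℝ) (γ2 : (Fin n → ℝ) → ℝ)
    (gi : (Fin n → ℝ) → Fin n → Fin n → ℝ)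
    (hpos : ∀ p, 0 < γ2 p)
    (hθθ : ∀ p a b, γ2 p * gi p a b = ∑ c, ∑ d, θ p a c * θ p b d * ind η x p c d)
    (u : (Fin n → ℝ) → ℝ) (p : Fin n → ℝ) (i : Fin m) :
    Dop η x θ γ2 u p i = ∑ a, ∑ c, gi p a c * pd a u p * pd c (fun q => x q i) p := by
  have hγ : γ2 p ≠ 0 := (hpos p).ne'
  unfold Dop pbr
  rw [sum_contract (θ p) (fun a => pd a u p) (fun b k => pd b (fun q => x q k) p)
      (fun c => pd c (fun q => x q i) p) (η (x p))]
  rw [inv_mul_eq_iff_eq_mul₀ hγ, Finset.mul_sum]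
  refine Finset.sum_congr rfl fun a _ => ?_
  rw [Finset.mul_sum]
  refine Finset.sum_congr rfl fun c _ => ?_
  have h1 : (∑ b, ∑ d, θ p a b * θ p c d * ind η x p b d) = γ2 p * gi p a c :=
    (hθθ p a c).symm
  have h2 : ∀ b d : Fin n, ind η x p b d
      = ∑ k, ∑ l, η (x p) k l * pd b (fun q => x q k) p * pd d (fun q => x q l) p := by
    intro b d; rfl
  calc (∑ b, ∑ d, θ p a b * θ p c d
          * (∑ k, ∑ l, η (x p) k l * pd b (fun q => x q k) p * pd d (fun q => x q l) p))
        * pd a u p * pd c (fun q => x q i) p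
      = (∑ b, ∑ d, θ p a b * θ p c d * ind η x p b d)
          * pd a u p * pd c (fun q => x q i) p := by
        rw [Finset.sum_congr rfl fun b _ => Finset.sum_congr rfl fun d _ => by rw [← h2 b d]]
    _ = γ2 p * (gi p a c * pd a u p * pd c (fun q => x q i) p) := by rw [h1]; ring


lemma nhV_eq {n m : ℕ} (η ηi : (Fin m → ℝ) → Fin m → Fin m → ℝ) (x : (Fin n → ℝ) → Fin m → ℝ)
    (θ : (Fin n → ℝ) → Fin n → Fin n → ℝ) (γ2 : (Fin n → ℝ) → ℝ)
    (gi : (Fin n → ℝ) → Fin n → Fin n → ℝ)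
    (hpos : ∀ p, 0 < γ2 p)
    (hθθ : ∀ p a b, γ2 p * gi p a b = ∑ c, ∑ d, θ p a c * θ p b d * ind η x p c d)
    (V : (Fin n → ℝ) → Fin m → ℝ) (p : Fin n → ℝ) (i j : Fin m) :
    nhV η ηi x θ γ2 V p i j
      = ∑ a, ∑ c, gi p a c * pd c (fun q => x q i) p * barD η ηi x V p a j := by
  have hD : ∀ k : Fin m, Dmat η x θ γ2 p i k
      = ∑ a, ∑ c, gi p a c * pd a (fun q => x q k) p * pd c (fun q => x q i) p := fun k =>
    Dop_eq η x θ γ2 gi hpos hθθ _ p i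
  unfold nhV barD
  rw [Dop_eq η x θ γ2 gi hpos hθθ (fun q => V q j) p i]
  simp only [hD]
  calc (∑ a, ∑ c, gi p a c * pd a (fun q => V q j) p * pd c (fun q => x q i) p)
        + ∑ k, ∑ l, (∑ a, ∑ c, gi p a c * pd a (fun q => x q k) p * pd c (fun q => x q i) p)
            * Chr η ηi (x p) j k l * V p l
      = (∑ a, ∑ c, gi p a c * pd a (fun q => V q j) p * pd c (fun q => x q i) p)
        + ∑ a, ∑ c, ∑ k, ∑ l, gi p a c * pd c (fun q => x q i) p
            * (Chr η ηi (x p) j k l * pd a (fun q => x q k) p * V p l) := by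
        congr 1
        calc ∑ k, ∑ l, (∑ a, ∑ c, gi p a c * pd a (fun q => x q k) p * pd c (fun q => x q i) p)
              * Chr η ηi (x p) j k l * V p l
            = ∑ k, ∑ l, ∑ a, ∑ c, gi p a c * pd c (fun q => x q i) p
                * (Chr η ηi (x p) j k l * pd a (fun q => x q k) p * V p l) := by
              refine Finset.sum_congr rfl fun k _ => Finset.sum_congr rfl fun l _ => ?_
              simp only [Finset.sum_mul]
              exact Finset.sum_congr rfl fun a _ => Finset.sum_congr rfl fun c _ => by ring
          _ = _ := (sum_push3 _).trans (sum_push3 _)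
    _ = ∑ a, ∑ c, gi p a c * pd c (fun q => x q i) p
          * (pd a (fun q => V q j) p
            + ∑ k, ∑ l, Chr η ηi (x p) j k l * pd a (fun q => x q k) p * V p l) := by
        rw [← Finset.sum_add_distrib]
        refine Finset.sum_congr rfl fun a _ => ?_
        rw [← Finset.sum_add_distrib]
        refine Finset.sum_congr rfl fun c _ => ?_
        rw [mul_add, ← mul_sum2]
        ring

lemma inner_contract {n m : ℕ} (r : ℝ) (G : Fin n → Fin n → ℝ) (E : Fin n → ℝ)
    (bD : Fin n → Fin m → ℝ) (H : Fin m → Fin m → ℝ) (NBv : Fin m → ℝ) :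
    ∑ j, ∑ k, (r * ∑ a, ∑ c, G a c * E c * bD a j) * H j k * NBv k
      = ∑ a, r * ((∑ c, G a c * E c) * (∑ j, ∑ k, bD a j * H j k * NBv k)) := by
  calc ∑ j, ∑ k, (r * ∑ a, ∑ c, G a c * E c * bD a j) * H j k * NBv k
      = ∑ j, ∑ k, ∑ a, ∑ c, r * (G a c * E c * (bD a j * H j k * NBv k)) := by
        refine Finset.sum_congr rfl fun j _ => Finset.sum_congr rfl fun k _ => ?_
        simp only [Finset.sum_mul, Finset.mul_sum]
        refine Finset.sum_congr rfl fun a _ => Finset.sum_congr rfl fun c _ => by ring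
    _ = ∑ a, ∑ c, ∑ j, ∑ k, r * (G a c * E c * (bD a j * H j k * NBv k)) :=
        (sum_push3 _).trans (sum_push3 _)
    _ = ∑ a, r * ((∑ c, G a c * E c) * (∑ j, ∑ k, bD a j * H j k * NBv k)) := by
        refine Finset.sum_congr rfl fun a _ => ?_
        simp only [Finset.sum_mul, Finset.mul_sum]
        rw [sum_push2]

lemma outer_contract {n m : ℕ} (H : Fin m → Fin m → ℝ) (Φ : Fin n → Fin m → ℝ)
    (ce : Fin n → ℝ) (E : Fin n → Fin m → ℝ) :
    ∑ i, ∑ l, H i l * (∑ a, Φ a i) * (∑ e, ce e * E e l)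
      = ∑ a, ∑ e, ce e * (∑ i, ∑ l, H i l * Φ a i * E e l) := by
  calc ∑ i, ∑ l, H i l * (∑ a, Φ a i) * (∑ e, ce e * E e l)
      = ∑ i, ∑ l, ∑ a, ∑ e, ce e * (H i l * Φ a i * E e l) := by
        refine Finset.sum_congr rfl fun i _ => Finset.sum_congr rfl fun l _ => ?_
        simp only [Finset.sum_mul, Finset.mul_sum]
        rw [Finset.sum_comm]
        refine Finset.sum_congr rfl fun a _ => Finset.sum_congr rfl fun e _ => by ring
    _ = ∑ a, ∑ e, ∑ i, ∑ l, ce e * (H i l * Φ a i * E e l) :=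
        (sum_push3 _).trans (sum_push3 _)
    _ = ∑ a, ∑ e, ce e * (∑ i, ∑ l, H i l * Φ a i * E e l) := by
        refine Finset.sum_congr rfl fun a _ => Finset.sum_congr rfl fun e _ => ?_
        rw [mul_sum2]

lemma third_contract {n m : ℕ} (r t : ℝ) (H : Fin m → Fin m → ℝ) (G : Fin n → ℝ)
    (Ec : Fin n → Fin m → ℝ) (Ee : Fin m → ℝ) :
    ∑ i, ∑ l, H i l * (r * ((∑ c, G c * Ec c i) * t)) * Ee l
      = r * t * ∑ c, G c * (∑ i, ∑ l, H i l * Ec c i * Ee l) := by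
  calc ∑ i, ∑ l, H i l * (r * ((∑ c, G c * Ec c i) * t)) * Ee l
      = ∑ i, ∑ l, ∑ c, r * t * (G c * (H i l * Ec c i * Ee l)) := by
        refine Finset.sum_congr rfl fun i _ => Finset.sum_congr rfl fun l _ => ?_
        simp only [Finset.sum_mul, Finset.mul_sum]
        refine Finset.sum_congr rfl fun c _ => by ring
    _ = ∑ c, ∑ i, ∑ l, r * t * (G c * (H i l * Ec c i * Ee l)) :=
        (sum_push2 _).trans (sum_push2 _)
    _ = r * t * ∑ c, G c * (∑ i, ∑ l, H i l * Ec c i * Ee l) := by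
        simp only [Finset.mul_sum]

/-- For `B_A^{ij} = −γ² ∇̂^i N_A^j` and tangent `X`,
`η(B_A(N_B), X) = −γ² (D_X)_{AB}` where `D_X N_A = (D_X)_{AB} N_B` is the normal
component of `∇̄_X N_A` in Weingarten's formula. -/
theorem statement_4 {n m r : ℕ}
    (η ηi : (Fin m → ℝ) → Fin m → Fin m → ℝ) (x : (Fin n → ℝ) → Fin m → ℝ)
    (θ : (Fin n → ℝ) → Fin n → Fin n → ℝ) (γ2 : (Fin n → ℝ) → ℝ)
    (gi : (Fin n → ℝ) → Fin n → Fin n → ℝ)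
    (N : Fin r → (Fin n → ℝ) → Fin m → ℝ)
    (W : Fin r → (Fin n → ℝ) → Fin n → Fin n → ℝ)
    (DN : Fin r → (Fin n → ℝ) → Fin n → Fin m → ℝ)
    (hη : IsMetric η ηi) (hx : SmoothEmb x) (hakp : IsAKP η x θ γ2 gi)
    (hN : NormalFrame η ηi x θ γ2 N)
    (hWein : ∀ A p a i, barD η ηi x (N A) p a i
      = -(∑ b, W A p a b * pd b (fun q => x q i) p) + DN A p a i)
    (hDN : ∀ A p a b, (∑ i, ∑ j, η (x p) i j * DN A p a i * pd b (fun q => x q j) p) = 0) :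
    ∀ (A B : Fin r) (p : Fin n → ℝ) (c : (Fin n → ℝ) → Fin n → ℝ),
      (∑ i, ∑ l, η (x p) i l
          * (∑ j, ∑ k, Bmap η ηi x θ γ2 (N A) p i j * η (x p) j k * N B p k)
          * tv x c p l)
        = - γ2 p * ∑ a, c p a * (∑ i, ∑ j, η (x p) i j * DN A p a i * N B p j) := by
  intro A B p c
  obtain ⟨hηs, hηsym, hηpd, hηinv⟩ := hη
  obtain ⟨hanti, hjac, hθsm, hgism, hγsm, hpos, hGI, hθθ⟩ := hakp
  obtain ⟨hNsm, hNN, hNT, hcompl⟩ := hN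
  -- gi is also a left inverse of the induced metric
  have hgig : ∀ a b : Fin n, (∑ c', gi p a c' * ind η x p c' b) = if a = b then (1:ℝ) else 0 := by
    have h1 : (Matrix.of fun a b => ind η x p a b : Matrix (Fin n) (Fin n) ℝ)
        * (Matrix.of fun a b => gi p a b) = 1 := by
      ext a b
      rw [Matrix.mul_apply, Matrix.one_apply]
      exact hGI p a b
    have h2 := mul_eq_one_comm.mp h1
    intro a b
    calc (∑ c', gi p a c' * ind η x p c' b)
        = ((Matrix.of fun a b => gi p a b : Matrix (Fin n) (Fin n) ℝ)
            * (Matrix.of fun a b => ind η x p a b)) a b := (Matrix.mul_apply).symm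
      _ = (1 : Matrix (Fin n) (Fin n) ℝ) a b := by rw [h2]
      _ = if a = b then (1:ℝ) else 0 := Matrix.one_apply
  -- tangential sums against a normal field vanish
  have hz : ∀ b : Fin n, (∑ j, ∑ k, η (x p) j k * pd b (fun q => x q j) p * N B p k) = 0 := by
    intro b
    calc ∑ j, ∑ k, η (x p) j k * pd b (fun q => x q j) p * N B p k
        = ∑ j, ∑ k, η (x p) k j * N B p k * pd b (fun q => x q j) p := by
          refine Finset.sum_congr rfl fun j _ => Finset.sum_congr rfl fun k _ => ?_
          rw [hηsym (x p) j k]; ring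
      _ = ∑ k, ∑ j, η (x p) k j * N B p k * pd b (fun q => x q j) p := Finset.sum_comm
      _ = 0 := hNT B p b
  -- value of the normal-frame pairing
  have hTval : ∀ a : Fin n, (∑ j, ∑ k, barD η ηi x (N A) p a j * η (x p) j k * N B p k)
      = ∑ i, ∑ j, η (x p) i j * DN A p a i * N B p j := by
    intro a
    simp only [hWein A p a]
    calc ∑ j, ∑ k, (-(∑ b, W A p a b * pd b (fun q => x q j) p) + DN A p a j)
            * η (x p) j k * N B p k
        = ∑ j, ∑ k, ((∑ b, -(W A p a b * (η (x p) j k * pd b (fun q => x q j) p * N B p k)))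
            + DN A p a j * η (x p) j k * N B p k) := by
          refine Finset.sum_congr rfl fun j _ => Finset.sum_congr rfl fun k _ => ?_
          rw [add_mul, add_mul]
          congr 1
          rw [neg_mul, neg_mul, Finset.sum_mul, Finset.sum_mul, ← Finset.sum_neg_distrib]
          exact Finset.sum_congr rfl fun b _ => by ring
      _ = (∑ j, ∑ k, ∑ b, -(W A p a b * (η (x p) j k * pd b (fun q => x q j) p * N B p k)))
            + ∑ j, ∑ k, DN A p a j * η (x p) j k * N B p k := by
          rw [← Finset.sum_add_distrib]
          exact Finset.sum_congr rfl fun j _ => Finset.sum_add_distrib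
      _ = (∑ b, ∑ j, ∑ k, -(W A p a b * (η (x p) j k * pd b (fun q => x q j) p * N B p k)))
            + ∑ j, ∑ k, DN A p a j * η (x p) j k * N B p k := by
          rw [(sum_push2 _).trans (sum_push2 _)]
      _ = ∑ i, ∑ j, η (x p) i j * DN A p a i * N B p j := by
          have h1 : (∑ b, ∑ j, ∑ k,
              -(W A p a b * (η (x p) j k * pd b (fun q => x q j) p * N B p k))) = 0 := by
            refine Finset.sum_eq_zero fun b _ => ?_
            have h2 : (∑ j, ∑ k,
                -(W A p a b * (η (x p) j k * pd b (fun q => x q j) p * N B p k)))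
                = -(W A p a b
                    * ∑ j, ∑ k, η (x p) j k * pd b (fun q => x q j) p * N B p k) := by
              rw [mul_sum2]
              simp [Finset.sum_neg_distrib]
            rw [h2, hz b, mul_zero, neg_zero]
          rw [h1, zero_add]
          exact Finset.sum_congr rfl fun i _ => Finset.sum_congr rfl fun j _ => by ring
  have hnhV : ∀ i j, nhV η ηi x θ γ2 (N A) p i j
      = ∑ a, ∑ c', gi p a c' * pd c' (fun q => x q i) p * barD η ηi x (N A) p a j :=
    nhV_eq η ηi x θ γ2 gi hpos hθθ (N A) p
  unfold Bmap tv
  simp only [hnhV]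
  have hInner : ∀ i : Fin m, (∑ j, ∑ k,
      (-γ2 p * ∑ a, ∑ c', gi p a c' * pd c' (fun q => x q i) p * barD η ηi x (N A) p a j)
        * η (x p) j k * N B p k)
      = ∑ a, -γ2 p * ((∑ c', gi p a c' * pd c' (fun q => x q i) p)
          * (∑ j, ∑ k, barD η ηi x (N A) p a j * η (x p) j k * N B p k)) := fun i =>
    inner_contract (-γ2 p) (gi p) (fun c' => pd c' (fun q => x q i) p)
      (fun a j => barD η ηi x (N A) p a j) (η (x p)) (N B p)
  simp only [hInner]
  rw [outer_contract (η (x p))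
      (fun a i => -γ2 p * ((∑ c', gi p a c' * pd c' (fun q => x q i) p)
        * (∑ j, ∑ k, barD η ηi x (N A) p a j * η (x p) j k * N B p k)))
      (fun e => c p e) (fun e l => pd e (fun q => x q l) p)]
  have hThird : ∀ a e : Fin n, (∑ i, ∑ l, η (x p) i l
      * (-γ2 p * ((∑ c', gi p a c' * pd c' (fun q => x q i) p)
          * (∑ j, ∑ k, barD η ηi x (N A) p a j * η (x p) j k * N B p k)))
      * pd e (fun q => x q l) p)
      = -γ2 p * (∑ j, ∑ k, barD η ηi x (N A) p a j * η (x p) j k * N B p k)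
          * ∑ c', gi p a c' * (∑ i, ∑ l, η (x p) i l * pd c' (fun q => x q i) p
              * pd e (fun q => x q l) p) := fun a e =>
    third_contract (-γ2 p) _ (η (x p)) (fun c' => gi p a c')
      (fun c' i => pd c' (fun q => x q i) p) (fun l => pd e (fun q => x q l) p)
  simp only [hThird]
  have hind : ∀ (a e c' : Fin n), (∑ i, ∑ l, η (x p) i l * pd c' (fun q => x q i) p
      * pd e (fun q => x q l) p) = ind η x p c' e := fun a e c' => rfl
  calc ∑ a, ∑ e, c p e * (-γ2 p
          * (∑ j, ∑ k, barD η ηi x (N A) p a j * η (x p) j k * N B p k)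
          * ∑ c', gi p a c' * (∑ i, ∑ l, η (x p) i l * pd c' (fun q => x q i) p
              * pd e (fun q => x q l) p))
      = ∑ a, ∑ e, c p e * (-γ2 p
          * (∑ j, ∑ k, barD η ηi x (N A) p a j * η (x p) j k * N B p k)
          * if a = e then (1:ℝ) else 0) := by
        refine Finset.sum_congr rfl fun a _ => Finset.sum_congr rfl fun e _ => ?_
        rw [show (∑ c', gi p a c' * (∑ i, ∑ l, η (x p) i l * pd c' (fun q => x q i) p
            * pd e (fun q => x q l) p)) = ∑ c', gi p a c' * ind η x p c' e from rfl, hgig a e]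
    _ = ∑ a, c p a * (-γ2 p
          * (∑ j, ∑ k, barD η ηi x (N A) p a j * η (x p) j k * N B p k)) := by
        refine Finset.sum_congr rfl fun a _ => ?_
        simp only [mul_ite, mul_one, mul_zero]
        rw [Finset.sum_ite_eq (Finset.univ) a
          (fun e => c p e * (-γ2 p * ∑ j, ∑ k, barD η ηi x (N A) p a j
            * η (x p) j k * N B p k))]
        simp
    _ = - γ2 p * ∑ a, c p a * (∑ i, ∑ j, η (x p) i j * DN A p a i * N B p j) := by
        simp only [hTval]
        rw [Finset.mul_sum]
        exact Finset.sum_congr rfl fun a _ => by ring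


end KP
end

section
/- Let Σ be a submanifold of (M,η) with an almost Kähler–Poisson structure θ of characteristic function γ², and assume (Σ, g, J) is a Kähler manifold with respect to the associated complex structure J = γ^{-1}θ. Define D̃^{ik} = γ^{-1}{x^i, x^k} and ∇̃^i = D̃^{ik} ∇̄_k. Then for any X, Y ∈ TΣ it holds that X_j Y_k (∇̃^i D̃^{jk}) = 0. -/
open scoped BigOperators

namespace KP

section toolkit
variable {k l : ℕ} {a b : Fin k} {f g : (Fin k → ℝ) → ℝ} {p : Fin k → ℝ}

lemma pd_mul (hf : DifferentiableAt ℝ f p) (hg : DifferentiableAt ℝ g p) :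
    pd a (fun q => f q * g q) p = pd a f p * g p + f p * pd a g p := by
  simp [pd, fderiv_fun_mul hf hg]; ring

lemma pd_sum {ι : Type*} (s : Finset ι) (F : ι → (Fin k → ℝ) → ℝ)
    (h : ∀ i ∈ s, DifferentiableAt ℝ (F i) p) :
    pd a (fun q => ∑ i ∈ s, F i q) p = ∑ i ∈ s, pd a (F i) p := by
  simp [pd, fderiv_fun_sum h]

lemma contDiff_pd (hf : ContDiff ℝ (⊤ : ℕ∞) f) : ContDiff ℝ (⊤ : ℕ∞) fun q => pd a f q := by
  exact (hf.fderiv_right (by simp)).clm_apply contDiff_const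

lemma pd_comm (hf : ContDiff ℝ (⊤ : ℕ∞) f) :
    pd a (fun q => pd b f q) p = pd b (fun q => pd a f q) p := by
  have h2 : ContDiffAt ℝ 2 f p := (hf.of_le (by exact WithTop.coe_le_coe.mpr (le_top : (2 : ℕ∞) ≤ ⊤))).contDiffAt
  have hs := h2.isSymmSndFDerivAt (by norm_num)
  have key : ∀ c d : Fin k, pd c (fun q => pd d f q) p
      = fderiv ℝ (fderiv ℝ f) p (Pi.single c 1) (Pi.single d 1) := by
    intro c d
    have hdiff : DifferentiableAt ℝ (fderiv ℝ f) p :=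
      ((hf.fderiv_right (m := 1) (by exact WithTop.coe_le_coe.mpr (le_top : ((1 : ℕ∞) + 1) ≤ ⊤))).differentiable one_ne_zero).differentiableAt
    simp only [pd]
    rw [show (fun q => fderiv ℝ f q (Pi.single d 1)) = fun q => (fderiv ℝ f q) ((fun _ : (Fin k → ℝ) => (Pi.single d 1 : Fin k → ℝ)) q) from rfl]
    rw [fderiv_clm_apply hdiff (differentiableAt_const _)]
    simp
  rw [key, key, hs.eq]

lemma pd_comp (x : (Fin k → ℝ) → Fin l → ℝ) (f : (Fin l → ℝ) → ℝ)
    (hf : DifferentiableAt ℝ f (x p)) (hx : ∀ i, DifferentiableAt ℝ (fun q => x q i) p) :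
    pd a (fun q => f (x q)) p = ∑ i, pd a (fun q => x q i) p * pd i f (x p) := by
  have hxd : DifferentiableAt ℝ x p := by
    rw [show x = fun q i => x q i from rfl]; exact differentiableAt_pi.2 hx
  have hcomp : fderiv ℝ (fun q => f (x q)) p = (fderiv ℝ f (x p)).comp (fderiv ℝ x p) :=
    fderiv_comp p hf hxd
  simp only [pd, hcomp, ContinuousLinearMap.comp_apply]
  have hv : fderiv ℝ x p (Pi.single a 1) = fun i => pd a (fun q => x q i) p := by
    rw [show x = fun q i => x q i from rfl, fderiv_pi hx]
    rfl
  rw [hv]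
  have : (fun i => pd a (fun q => x q i) p) = ∑ i, (pd a (fun q => x q i) p) • (Pi.single i 1 : Fin l → ℝ) := by
    ext j
    rw [Finset.sum_apply]
    simp [Pi.single_apply, mul_comm]
  rw [this]
  rw [map_sum]
  apply Finset.sum_congr rfl; intro i _
  rw [map_smul]; simp [pd, smul_eq_mul]

end toolkit

variable {n m : ℕ}

/-- `D̃^{ik} = γ^{-1} {x^i, x^k}`. -/
noncomputable def Dtil {n m : ℕ} (x : (Fin n → ℝ) → Fin m → ℝ)
    (θ : (Fin n → ℝ) → Fin n → Fin n → ℝ) (γ2 : (Fin n → ℝ) → ℝ)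
    (p : Fin n → ℝ) (i k : Fin m) : ℝ :=
  (Real.sqrt (γ2 p))⁻¹ * Pbig x θ p i k

/-- `∇̃^i(u) = D̃^{ik} ∇̄_k u = γ^{-1} {x^i, u}` on scalars. -/
noncomputable def DtopS {n m : ℕ} (x : (Fin n → ℝ) → Fin m → ℝ)
    (θ : (Fin n → ℝ) → Fin n → Fin n → ℝ) (γ2 : (Fin n → ℝ) → ℝ)
    (u : (Fin n → ℝ) → ℝ) (p : Fin n → ℝ) (i : Fin m) : ℝ :=
  (Real.sqrt (γ2 p))⁻¹ * pbr θ (fun q => x q i) u p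

/-- `∇̃^i T^{jk} = D̃^{il} ∇̄_l T^{jk}` for `2`-contravariant tensors along `Σ`. -/
noncomputable def nhT2til {n m : ℕ} (η ηi : (Fin m → ℝ) → Fin m → Fin m → ℝ)
    (x : (Fin n → ℝ) → Fin m → ℝ) (θ : (Fin n → ℝ) → Fin n → Fin n → ℝ)
    (γ2 : (Fin n → ℝ) → ℝ) (T : (Fin n → ℝ) → Fin m → Fin m → ℝ)
    (p : Fin n → ℝ) (i j k : Fin m) : ℝ :=
  DtopS x θ γ2 (fun q => T q j k) p i
    + ∑ l, ∑ l', Dtil x θ γ2 p i l * Chr η ηi (x p) j l l' * T p l' k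
    + ∑ l, ∑ l', Dtil x θ γ2 p i l * Chr η ηi (x p) k l l' * T p j l'

/-- The associated almost complex structure `J^a_b = γ^{-1} θ^{ac} g_{cb}` on `Σ`. -/
noncomputable def JmK {n m : ℕ} (η : (Fin m → ℝ) → Fin m → Fin m → ℝ)
    (x : (Fin n → ℝ) → Fin m → ℝ) (θ : (Fin n → ℝ) → Fin n → Fin n → ℝ)
    (γ2 : (Fin n → ℝ) → ℝ) (p : Fin n → ℝ) (a b : Fin n) : ℝ :=
  (Real.sqrt (γ2 p))⁻¹ * ∑ c, θ p a c * ind η x p c b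

section dev

variable {n m : ℕ}

/-- tangent frame `e_a^j = ∂_a x^j`. -/
noncomputable def ee (x : (Fin n → ℝ) → Fin m → ℝ) (q : Fin n → ℝ) (a : Fin n) (j : Fin m) : ℝ :=
  pd a (fun r => x r j) q

/-- `F_{cd} = γ^{-1} θ^{cd}`. -/
noncomputable def Ff (θ : (Fin n → ℝ) → Fin n → Fin n → ℝ) (γ2 : (Fin n → ℝ) → ℝ)
    (q : Fin n → ℝ) (c d : Fin n) : ℝ := (Real.sqrt (γ2 q))⁻¹ * θ q c d

/-- lowered Christoffel symbols of the induced metric. -/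
noncomputable def Gl (η : (Fin m → ℝ) → Fin m → Fin m → ℝ) (x : (Fin n → ℝ) → Fin m → ℝ)
    (p : Fin n → ℝ) (a b c : Fin n) : ℝ :=
  (1/2) * (pd b (fun q => ind η x q a c) p + pd c (fun q => ind η x q a b) p
    - pd a (fun q => ind η x q b c) p)

/-- derivative of ambient metric entry. -/
noncomputable def Pq (η : (Fin m → ℝ) → Fin m → Fin m → ℝ) (x : (Fin n → ℝ) → Fin m → ℝ)
    (p : Fin n → ℝ) (r i j : Fin m) : ℝ := pd r (fun y => η y i j) (x p)

noncomputable def Aq (η : (Fin m → ℝ) → Fin m → Fin m → ℝ) (x : (Fin n → ℝ) → Fin m → ℝ)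
    (p : Fin n → ℝ) (b a c : Fin n) : ℝ :=
  ∑ i, ∑ j, (∑ r, ee x p b r * Pq η x p r i j) * ee x p a i * ee x p c j

noncomputable def Bq (η : (Fin m → ℝ) → Fin m → Fin m → ℝ) (x : (Fin n → ℝ) → Fin m → ℝ)
    (p : Fin n → ℝ) (b a c : Fin n) : ℝ :=
  ∑ i, ∑ j, η (x p) i j * pd b (fun q => ee x q a i) p * ee x p c j

variable {η ηi : (Fin m → ℝ) → Fin m → Fin m → ℝ} {x : (Fin n → ℝ) → Fin m → ℝ}
  {θ : (Fin n → ℝ) → Fin n → Fin n → ℝ} {γ2 : (Fin n → ℝ) → ℝ}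
  {gi : (Fin n → ℝ) → Fin n → Fin n → ℝ} {p : Fin n → ℝ}

lemma ee_smooth (hx : SmoothEmb x) (a : Fin n) (j : Fin m) :
    ContDiff ℝ (⊤ : ℕ∞) fun q => ee x q a j := contDiff_pd (hx j)

lemma ee_diff (hx : SmoothEmb x) (a : Fin n) (j : Fin m) :
    DifferentiableAt ℝ (fun q => ee x q a j) p :=
  ((ee_smooth hx a j).differentiable (by simp)).differentiableAt

lemma etax_smooth (hη : Smooth2 η) (hx : SmoothEmb x) (i j : Fin m) :
    ContDiff ℝ (⊤ : ℕ∞) fun q => η (x q) i j :=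
  (hη i j).comp (contDiff_pi.2 hx)

lemma ind_smooth (hη : Smooth2 η) (hx : SmoothEmb x) (a b : Fin n) :
    ContDiff ℝ (⊤ : ℕ∞) fun q => ind η x q a b := by
  unfold ind
  exact ContDiff.sum fun i _ => ContDiff.sum fun j _ =>
    ((etax_smooth hη hx i j).mul (ee_smooth hx a i)).mul (ee_smooth hx b j)

lemma ind_diff (hη : Smooth2 η) (hx : SmoothEmb x) (a b : Fin n) :
    DifferentiableAt ℝ (fun q => ind η x q a b) p :=
  ((ind_smooth hη hx a b).differentiable (by simp)).differentiableAt

lemma Ff_diff (hθ : Smooth2 θ) (hγ : ContDiff ℝ (⊤ : ℕ∞) γ2) (hpos : ∀ p, 0 < γ2 p) (c d : Fin n) :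
    DifferentiableAt ℝ (fun q => Ff θ γ2 q c d) p := by
  have h2 : DifferentiableAt ℝ (fun q => Real.sqrt (γ2 q)) p :=
    ((hγ.differentiable (by simp)).differentiableAt).sqrt (ne_of_gt (hpos p))
  have h3 : DifferentiableAt ℝ (fun q => (Real.sqrt (γ2 q))⁻¹) p :=
    h2.inv (by have := Real.sqrt_pos.mpr (hpos p); linarith)
  exact h3.mul ((hθ c d).differentiable (by simp)).differentiableAt

lemma JmK_eq (q : Fin n → ℝ) (c a' : Fin n) :
    JmK η x θ γ2 q c a' = ∑ d, Ff θ γ2 q c d * ind η x q d a' := by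
  unfold JmK Ff
  rw [Finset.mul_sum]
  exact Finset.sum_congr rfl fun d _ => by ring

lemma Dtil_eq (q : Fin n → ℝ) (j k : Fin m) :
    Dtil x θ γ2 q j k = ∑ c, ∑ d, Ff θ γ2 q c d * ee x q c j * ee x q d k := by
  unfold Dtil Pbig pbr Ff ee
  rw [Finset.mul_sum]
  refine Finset.sum_congr rfl fun c _ => ?_
  rw [Finset.mul_sum]
  exact Finset.sum_congr rfl fun d _ => by ring

lemma pd_Dtil (hx : SmoothEmb x) (hθ : Smooth2 θ) (hγ : ContDiff ℝ (⊤ : ℕ∞) γ2)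
    (hpos : ∀ p, 0 < γ2 p) (b : Fin n) (j k : Fin m) :
    pd b (fun q => Dtil x θ γ2 q j k) p
      = ∑ c, ∑ d, (pd b (fun q => Ff θ γ2 q c d) p * ee x p c j * ee x p d k
        + Ff θ γ2 p c d * pd b (fun q => ee x q c j) p * ee x p d k
        + Ff θ γ2 p c d * ee x p c j * pd b (fun q => ee x q d k) p) := by
  have hrw : (fun q => Dtil x θ γ2 q j k)
      = fun q => ∑ c, ∑ d, Ff θ γ2 q c d * ee x q c j * ee x q d k :=
    funext fun q => Dtil_eq q j k
  have hFe : ∀ (c d : Fin n), DifferentiableAt ℝ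
      (fun q => Ff θ γ2 q c d * ee x q c j * ee x q d k) p := fun c d =>
    ((Ff_diff hθ hγ hpos c d).mul (ee_diff hx c j)).mul (ee_diff hx d k)
  rw [hrw, pd_sum Finset.univ _ (fun c _ => by
    exact DifferentiableAt.fun_sum fun d _ => hFe c d)]
  refine Finset.sum_congr rfl fun c _ => ?_
  rw [pd_sum Finset.univ _ (fun d _ => hFe c d)]
  refine Finset.sum_congr rfl fun d _ => ?_
  rw [pd_mul ((Ff_diff hθ hγ hpos c d).fun_mul (ee_diff hx c j)) (ee_diff hx d k),
    pd_mul (Ff_diff hθ hγ hpos c d) (ee_diff hx c j)]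
  ring

lemma pd_ind (hη : Smooth2 η) (hx : SmoothEmb x) (b : Fin n) (a c : Fin n) :
    pd b (fun q => ind η x q a c) p
      = ∑ i, ∑ j, ((∑ r, ee x p b r * Pq η x p r i j) * ee x p a i * ee x p c j
        + η (x p) i j * pd b (fun q => ee x q a i) p * ee x p c j
        + η (x p) i j * ee x p a i * pd b (fun q => ee x q c j) p) := by
  have hterm : ∀ (i j : Fin m), DifferentiableAt ℝ
      (fun q => η (x q) i j * ee x q a i * ee x q c j) p := fun i j =>
    ((((etax_smooth hη hx i j).differentiable (by simp)).differentiableAt).mul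
      (ee_diff hx a i)).mul (ee_diff hx c j)
  have hrw : (fun q => ind η x q a c)
      = fun q => ∑ i, ∑ j, η (x q) i j * ee x q a i * ee x q c j := rfl
  rw [hrw, pd_sum Finset.univ _ (fun i _ => DifferentiableAt.fun_sum fun j _ => hterm i j)]
  refine Finset.sum_congr rfl fun i _ => ?_
  rw [pd_sum Finset.univ _ (fun j _ => hterm i j)]
  refine Finset.sum_congr rfl fun j _ => ?_
  rw [pd_mul ((((etax_smooth hη hx i j).differentiable (by simp)).differentiableAt).fun_mul
      (ee_diff hx a i)) (ee_diff hx c j),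
    pd_mul (((etax_smooth hη hx i j).differentiable (by simp)).differentiableAt) (ee_diff hx a i),
    pd_comp x (fun y => η y i j) (((hη i j).differentiable (by simp)).differentiableAt)
      (fun i' => ((hx i').differentiable (by simp)).differentiableAt)]
  unfold ee Pq
  ring

end dev


section dev2
variable {n m : ℕ} {η ηi : (Fin m → ℝ) → Fin m → Fin m → ℝ} {x : (Fin n → ℝ) → Fin m → ℝ}
  {θ : (Fin n → ℝ) → Fin n → Fin n → ℝ} {γ2 : (Fin n → ℝ) → ℝ}
  {gi : (Fin n → ℝ) → Fin n → Fin n → ℝ} {p : Fin n → ℝ}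

lemma sum_comm3_23 {a b c : ℕ} (f : Fin a → Fin b → Fin c → ℝ) :
    ∑ i, ∑ j, ∑ k, f i j k = ∑ i, ∑ k, ∑ j, f i j k :=
  Finset.sum_congr rfl fun _ _ => Finset.sum_comm

lemma sum_rot {a b c : ℕ} (f : Fin a → Fin b → Fin c → ℝ) :
    ∑ i, ∑ j, ∑ k, f i j k = ∑ k, ∑ i, ∑ j, f i j k := by
  rw [sum_comm3_23]
  exact Finset.sum_comm

lemma Qq_symm (hx : SmoothEmb x) (a b : Fin n) (i : Fin m) :
    pd b (fun q => ee x q a i) p = pd a (fun q => ee x q b i) p :=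
  pd_comm (hx i)

lemma pdG (hs : ∀ q i j, η q i j = η q j i) (hη : Smooth2 η) (hx : SmoothEmb x)
    (b a c : Fin n) :
    pd b (fun q => ind η x q a c) p
      = Aq η x p b a c + Bq η x p b a c + Bq η x p b c a := by
  rw [pd_ind hη hx b a c]
  have hB : Bq η x p b c a
      = ∑ i, ∑ j, η (x p) i j * ee x p a i * pd b (fun q => ee x q c j) p := by
    unfold Bq
    rw [Finset.sum_comm]
    refine Finset.sum_congr rfl fun i _ => Finset.sum_congr rfl fun j _ => ?_
    rw [hs (x p) j i]
    ring
  rw [hB]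
  unfold Aq Bq
  simp only [← Finset.sum_add_distrib]

lemma Bq_symm (hx : SmoothEmb x) (b a c : Fin n) :
    Bq η x p b a c = Bq η x p a b c := by
  unfold Bq
  refine Finset.sum_congr rfl fun i _ => Finset.sum_congr rfl fun j _ => ?_
  rw [Qq_symm hx]

lemma chrL (hη : IsMetric η ηi) (l l1 l2 : Fin m) :
    ∑ j, η (x p) l j * Chr η ηi (x p) j l1 l2
      = (1/2) * (Pq η x p l1 l l2 + Pq η x p l2 l l1 - Pq η x p l l1 l2) := by
  obtain ⟨-, -, -, hinv⟩ := hη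
  unfold Chr
  set y := x p with hy
  set W : Fin m → ℝ := fun d =>
    pd l1 (fun r => η r d l2) y + pd l2 (fun r => η r d l1) y - pd d (fun r => η r l1 l2) y
    with hW
  calc ∑ j, η y l j * (1/2 * ∑ d, ηi y j d * W d)
      = ∑ j, ∑ d, η y l j * ηi y j d * (1/2 * W d) := by
        refine Finset.sum_congr rfl fun j _ => ?_
        rw [Finset.mul_sum, Finset.mul_sum]
        exact Finset.sum_congr rfl fun d _ => by ring
    _ = ∑ d, (∑ j, η y l j * ηi y j d) * (1/2 * W d) := by
        rw [Finset.sum_comm]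
        exact Finset.sum_congr rfl fun d _ => by rw [Finset.sum_mul]
    _ = ∑ d, (if l = d then (1:ℝ) else 0) * (1/2 * W d) := by
        refine Finset.sum_congr rfl fun d _ => ?_
        rw [hinv y l d]
    _ = 1/2 * W l := by
        simp [ite_mul]
    _ = (1/2) * (Pq η x p l1 l l2 + Pq η x p l2 l l1 - Pq η x p l l1 l2) := rfl

lemma gauss (hη : IsMetric η ηi) (hx : SmoothEmb x) (a b c : Fin n) :
    ∑ j, (∑ l, η (x p) j l * ee x p a l)
        * (pd b (fun q => ee x q c j) p
          + ∑ l, ∑ l', Chr η ηi (x p) j l l' * ee x p b l * ee x p c l')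
      = Gl η x p a b c := by
  have hs := hη.2.1
  have hsm := hη.1
  have hGl : Gl η x p a b c
      = (1/2) * (Aq η x p b a c + Aq η x p c a b - Aq η x p a b c) + Bq η x p b c a := by
    unfold Gl
    rw [pdG hs hsm hx b a c, pdG hs hsm hx c a b, pdG hs hsm hx a b c,
      Bq_symm hx b a c, Bq_symm hx c a b, Bq_symm (p := p) hx c b a]
    ring
  rw [hGl]
  have hsplit : ∑ j, (∑ l, η (x p) j l * ee x p a l)
        * (pd b (fun q => ee x q c j) p
          + ∑ l, ∑ l', Chr η ηi (x p) j l l' * ee x p b l * ee x p c l')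
      = (∑ j, (∑ l, η (x p) j l * ee x p a l) * pd b (fun q => ee x q c j) p)
        + ∑ j, (∑ l, η (x p) j l * ee x p a l)
            * ∑ l, ∑ l', Chr η ηi (x p) j l l' * ee x p b l * ee x p c l' := by
    rw [← Finset.sum_add_distrib]
    exact Finset.sum_congr rfl fun j _ => by ring
  rw [hsplit]
  have hpart1 : (∑ j, (∑ l, η (x p) j l * ee x p a l) * pd b (fun q => ee x q c j) p)
      = Bq η x p b c a := by
    unfold Bq
    refine Finset.sum_congr rfl fun j _ => ?_
    rw [Finset.sum_mul]
    exact Finset.sum_congr rfl fun l _ => by ring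
  have hpart2 : (∑ j, (∑ l, η (x p) j l * ee x p a l)
        * ∑ l, ∑ l', Chr η ηi (x p) j l l' * ee x p b l * ee x p c l')
      = (1/2) * (Aq η x p b a c + Aq η x p c a b - Aq η x p a b c) := by
    -- reduce to a triple sum over (l, l1, l2)
    have step1 : (∑ j, (∑ l, η (x p) j l * ee x p a l)
          * ∑ l, ∑ l', Chr η ηi (x p) j l l' * ee x p b l * ee x p c l')
        = ∑ l, ∑ l1, ∑ l2, ee x p a l
            * ((1/2) * (Pq η x p l1 l l2 + Pq η x p l2 l l1 - Pq η x p l l1 l2))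
            * ee x p b l1 * ee x p c l2 := by
      calc (∑ j, (∑ l, η (x p) j l * ee x p a l)
            * ∑ l, ∑ l', Chr η ηi (x p) j l l' * ee x p b l * ee x p c l')
          = ∑ j, ∑ l, ∑ l1, ∑ l2, η (x p) l j * ee x p a l
              * Chr η ηi (x p) j l1 l2 * ee x p b l1 * ee x p c l2 := by
            refine Finset.sum_congr rfl fun j _ => ?_
            rw [Finset.sum_mul]
            refine Finset.sum_congr rfl fun l _ => ?_
            rw [Finset.mul_sum]
            refine Finset.sum_congr rfl fun l1 _ => ?_
            rw [Finset.mul_sum]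
            refine Finset.sum_congr rfl fun l2 _ => ?_
            rw [hs (x p) j l]
            ring
        _ = ∑ l, ∑ l1, ∑ l2, (∑ j, η (x p) l j * Chr η ηi (x p) j l1 l2)
              * ee x p a l * ee x p b l1 * ee x p c l2 := by
            rw [Finset.sum_comm]
            refine Finset.sum_congr rfl fun l _ => ?_
            rw [Finset.sum_comm]
            refine Finset.sum_congr rfl fun l1 _ => ?_
            rw [Finset.sum_comm]
            refine Finset.sum_congr rfl fun l2 _ => ?_
            simp only [Finset.sum_mul]
            exact Finset.sum_congr rfl fun j _ => by ring
        _ = ∑ l, ∑ l1, ∑ l2, ee x p a l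
              * ((1/2) * (Pq η x p l1 l l2 + Pq η x p l2 l l1 - Pq η x p l l1 l2))
              * ee x p b l1 * ee x p c l2 := by
            refine Finset.sum_congr rfl fun l _ => Finset.sum_congr rfl fun l1 _ =>
              Finset.sum_congr rfl fun l2 _ => ?_
            rw [chrL hη l l1 l2]
            ring
    rw [step1]
    -- now expand the Aq's
    have hA : ∀ b' a' c' : Fin n, Aq η x p b' a' c'
        = ∑ i, ∑ j, ∑ r, ee x p b' r * Pq η x p r i j * ee x p a' i * ee x p c' j := by
      intro b' a' c'
      unfold Aq
      refine Finset.sum_congr rfl fun i _ => Finset.sum_congr rfl fun j _ => ?_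
      rw [Finset.sum_mul, Finset.sum_mul]
    rw [hA b a c, hA c a b, hA a b c]
    -- Aq b a c : ∑ i ∑ j ∑ r, ee b r * P r i j * ee a i * ee c j ; want (l=i, l1=r, l2=j)
    -- Aq c a b : ∑ i ∑ j ∑ r, ee c r * P r i j * ee a i * ee b j ; want (l=i, l1=j, l2=r)
    -- Aq a b c : ∑ i ∑ j ∑ r, ee a r * P r i j * ee b i * ee c j ; want (l=r, l1=i, l2=j)
    have e1 : (∑ i, ∑ j, ∑ r, ee x p b r * Pq η x p r i j * ee x p a i * ee x p c j)
        = ∑ l, ∑ l1, ∑ l2, ee x p a l * Pq η x p l1 l l2 * ee x p b l1 * ee x p c l2 := by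
      rw [sum_comm3_23]
      refine Finset.sum_congr rfl fun l _ => Finset.sum_congr rfl fun l1 _ =>
        Finset.sum_congr rfl fun l2 _ => by ring
    have e2 : (∑ i, ∑ j, ∑ r, ee x p c r * Pq η x p r i j * ee x p a i * ee x p b j)
        = ∑ l, ∑ l1, ∑ l2, ee x p a l * Pq η x p l2 l l1 * ee x p b l1 * ee x p c l2 := by
      refine Finset.sum_congr rfl fun l _ => ?_
      refine Finset.sum_congr rfl fun l1 _ => Finset.sum_congr rfl fun l2 _ => by ring
    have e3 : (∑ i, ∑ j, ∑ r, ee x p a r * Pq η x p r i j * ee x p b i * ee x p c j)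
        = ∑ l, ∑ l1, ∑ l2, ee x p a l * Pq η x p l l1 l2 * ee x p b l1 * ee x p c l2 := by
      exact sum_rot _
    rw [e1, e2, e3]
    simp only [← Finset.sum_sub_distrib, ← Finset.sum_add_distrib, Finset.mul_sum]
    exact Finset.sum_congr rfl fun l _ => Finset.sum_congr rfl fun l1 _ =>
      Finset.sum_congr rfl fun l2 _ => by ring
  rw [hpart1, hpart2]
  ring
end dev2


section dev3
variable {n m : ℕ} {η ηi : (Fin m → ℝ) → Fin m → Fin m → ℝ} {x : (Fin n → ℝ) → Fin m → ℝ}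
  {θ : (Fin n → ℝ) → Fin n → Fin n → ℝ} {γ2 : (Fin n → ℝ) → ℝ}
  {gi : (Fin n → ℝ) → Fin n → Fin n → ℝ} {p : Fin n → ℝ}

lemma ind_symm (hs : ∀ q i j, η q i j = η q j i) (q : Fin n → ℝ) (a b : Fin n) :
    ind η x q a b = ind η x q b a := by
  unfold ind
  rw [Finset.sum_comm]
  refine Finset.sum_congr rfl fun i _ => Finset.sum_congr rfl fun j _ => ?_
  rw [hs (x q) j i]
  ring

lemma lowerChr (hginv : ∀ p a b, (∑ c, ind η x p a c * gi p c b) = if a = b then (1:ℝ) else 0)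
    (a b c : Fin n) :
    ∑ e, ind η x p a e * Chr (fun q => ind η x q) gi p e b c = Gl η x p a b c := by
  unfold Chr
  set W : Fin n → ℝ := fun d =>
    pd b (fun r => ind η x r d c) p + pd c (fun r => ind η x r d b) p
      - pd d (fun r => ind η x r b c) p with hW
  calc ∑ e, ind η x p a e * (1/2 * ∑ d, gi p e d * W d)
      = ∑ e, ∑ d, ind η x p a e * gi p e d * (1/2 * W d) := by
        refine Finset.sum_congr rfl fun e _ => ?_
        rw [Finset.mul_sum, Finset.mul_sum]
        exact Finset.sum_congr rfl fun d _ => by ring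
    _ = ∑ d, (∑ e, ind η x p a e * gi p e d) * (1/2 * W d) := by
        rw [Finset.sum_comm]
        exact Finset.sum_congr rfl fun d _ => by rw [Finset.sum_mul]
    _ = ∑ d, (if a = d then (1:ℝ) else 0) * (1/2 * W d) := by
        refine Finset.sum_congr rfl fun d _ => ?_
        rw [hginv p a d]
    _ = 1/2 * W a := by simp [ite_mul]
    _ = Gl η x p a b c := rfl

lemma metcompat (hs : ∀ q i j, η q i j = η q j i) (b d a' : Fin n) :
    Gl η x p d b a' + Gl η x p a' b d = pd b (fun q => ind η x q d a') p := by
  have hfun : ∀ u v : Fin n, (fun q => ind η x q u v) = (fun q => ind η x q v u) :=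
    fun u v => funext fun q => ind_symm hs q u v
  unfold Gl
  rw [hfun a' d, hfun a' b, hfun b d]
  ring

lemma pd_J (hη1 : Smooth2 η) (hx : SmoothEmb x) (hθ : Smooth2 θ) (hγ : ContDiff ℝ (⊤ : ℕ∞) γ2)
    (hpos : ∀ p, 0 < γ2 p) (b c a' : Fin n) :
    pd b (fun q => JmK η x θ γ2 q c a') p
      = ∑ d, (pd b (fun q => Ff θ γ2 q c d) p * ind η x p d a'
        + Ff θ γ2 p c d * pd b (fun q => ind η x q d a') p) := by
  have hrw : (fun q => JmK η x θ γ2 q c a') = fun q => ∑ d, Ff θ γ2 q c d * ind η x q d a' :=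
    funext fun q => JmK_eq q c a'
  rw [hrw, pd_sum Finset.univ _
    (fun d _ => (Ff_diff hθ hγ hpos c d).fun_mul (ind_diff hη1 hx d a'))]
  exact Finset.sum_congr rfl fun d _ =>
    pd_mul (Ff_diff hθ hγ hpos c d) (ind_diff hη1 hx d a')

lemma keyE (hη : IsMetric η ηi) (hx : SmoothEmb x) (hakp : IsAKP η x θ γ2 gi)
    (hpar : ∀ p a b c, pd a (fun q => JmK η x θ γ2 q b c) p
      + (∑ d, Chr (fun q => ind η x q) gi p b a d * JmK η x θ γ2 p d c)
      - (∑ d, Chr (fun q => ind η x q) gi p d a c * JmK η x θ γ2 p b d) = 0)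
    (b a a' : Fin n) :
    ∑ c, ∑ d, (pd b (fun q => Ff θ γ2 q c d) p * ind η x p a c * ind η x p a' d
      + Ff θ γ2 p c d * Gl η x p a b c * ind η x p a' d
      + Ff θ γ2 p c d * ind η x p a c * Gl η x p a' b d) = 0 := by
  obtain ⟨hanti, hjac, hθ, hgi, hγ, hpos, hginv, hchar⟩ := hakp
  have hs := hη.2.1
  have hη1 := hη.1
  set K : Fin n → ℝ := fun d => ∑ c, ind η x p a c * Ff θ γ2 p c d with hK
  -- split the goal into three double sums
  have hsplit : ∑ c, ∑ d, (pd b (fun q => Ff θ γ2 q c d) p * ind η x p a c * ind η x p a' d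
        + Ff θ γ2 p c d * Gl η x p a b c * ind η x p a' d
        + Ff θ γ2 p c d * ind η x p a c * Gl η x p a' b d)
      = (∑ c, ∑ d, pd b (fun q => Ff θ γ2 q c d) p * ind η x p a c * ind η x p a' d)
        + (∑ c, ∑ d, Ff θ γ2 p c d * Gl η x p a b c * ind η x p a' d)
        + (∑ c, ∑ d, Ff θ γ2 p c d * ind η x p a c * Gl η x p a' b d) := by
    simp only [Finset.sum_add_distrib]
  rw [hsplit]
  -- hparJ
  have hparJ : ∀ c, pd b (fun q => JmK η x θ γ2 q c a') p
      = (∑ e, Chr (fun q => ind η x q) gi p e b a' * JmK η x θ γ2 p c e)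
        - ∑ e, Chr (fun q => ind η x q) gi p c b e * JmK η x θ γ2 p e a' := by
    intro c
    have h := hpar p b c a'
    linarith
  -- S1
  have hS1 : (∑ c, ∑ d, pd b (fun q => Ff θ γ2 q c d) p * ind η x p a c * ind η x p a' d)
      = (∑ d, K d * Gl η x p d b a')
        - (∑ e, Gl η x p a b e * JmK η x θ γ2 p e a')
        - (∑ d, K d * pd b (fun q => ind η x q d a') p) := by
    have e1 : ∀ c, (∑ d, pd b (fun q => Ff θ γ2 q c d) p * ind η x p a c * ind η x p a' d)
        = ind η x p a c * pd b (fun q => JmK η x θ γ2 q c a') p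
          - ∑ d, ind η x p a c * Ff θ γ2 p c d * pd b (fun q => ind η x q d a') p := by
      intro c
      rw [pd_J hη1 hx hθ hγ hpos b c a', Finset.mul_sum, ← Finset.sum_sub_distrib]
      refine Finset.sum_congr rfl fun d _ => ?_
      rw [ind_symm hs p a' d]
      ring
    calc (∑ c, ∑ d, pd b (fun q => Ff θ γ2 q c d) p * ind η x p a c * ind η x p a' d)
        = (∑ c, ind η x p a c * pd b (fun q => JmK η x θ γ2 q c a') p)
          - ∑ c, ∑ d, ind η x p a c * Ff θ γ2 p c d * pd b (fun q => ind η x q d a') p := by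
          rw [← Finset.sum_sub_distrib]
          exact Finset.sum_congr rfl fun c _ => e1 c
      _ = ((∑ c, ∑ e, ind η x p a c * Chr (fun q => ind η x q) gi p e b a'
              * JmK η x θ γ2 p c e)
          - ∑ c, ∑ e, ind η x p a c * Chr (fun q => ind η x q) gi p c b e
              * JmK η x θ γ2 p e a')
          - ∑ c, ∑ d, ind η x p a c * Ff θ γ2 p c d * pd b (fun q => ind η x q d a') p := by
          congr 1
          rw [← Finset.sum_sub_distrib]
          refine Finset.sum_congr rfl fun c _ => ?_
          rw [hparJ c, mul_sub, Finset.mul_sum, Finset.mul_sum]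
          congr 1 <;> exact Finset.sum_congr rfl fun e _ => by ring
      _ = (∑ d, K d * Gl η x p d b a')
          - (∑ e, Gl η x p a b e * JmK η x θ γ2 p e a')
          - (∑ d, K d * pd b (fun q => ind η x q d a') p) := by
          congr 1
          · congr 1
            -- piece A
            · calc (∑ c, ∑ e, ind η x p a c * Chr (fun q => ind η x q) gi p e b a'
                    * JmK η x θ γ2 p c e)
                  = ∑ c, ∑ e, ∑ d, ind η x p a c * Ff θ γ2 p c d
                      * (ind η x p d e * Chr (fun q => ind η x q) gi p e b a') := by
                    refine Finset.sum_congr rfl fun c _ => Finset.sum_congr rfl fun e _ => ?_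
                    rw [JmK_eq p c e, Finset.mul_sum]
                    exact Finset.sum_congr rfl fun d _ => by ring
                _ = ∑ d, ∑ c, ∑ e, ind η x p a c * Ff θ γ2 p c d
                      * (ind η x p d e * Chr (fun q => ind η x q) gi p e b a') :=
                    sum_rot _
                _ = ∑ d, K d * Gl η x p d b a' := by
                    refine Finset.sum_congr rfl fun d _ => ?_
                    rw [← lowerChr hginv d b a', hK]
                    simp only [Finset.sum_mul, Finset.mul_sum]
                    try rw [Finset.sum_comm]
                    try exact Finset.sum_congr rfl fun c _ =>
                      Finset.sum_congr rfl fun e _ => by ring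
            -- piece B
            · calc (∑ c, ∑ e, ind η x p a c * Chr (fun q => ind η x q) gi p c b e
                    * JmK η x θ γ2 p e a')
                  = ∑ e, (∑ c, ind η x p a c * Chr (fun q => ind η x q) gi p c b e)
                      * JmK η x θ γ2 p e a' := by
                    rw [Finset.sum_comm]
                    exact Finset.sum_congr rfl fun e _ => by rw [Finset.sum_mul]
                _ = ∑ e, Gl η x p a b e * JmK η x θ γ2 p e a' := by
                    refine Finset.sum_congr rfl fun e _ => ?_
                    rw [lowerChr hginv a b e]
          · rw [Finset.sum_comm]
            refine Finset.sum_congr rfl fun d _ => ?_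
            rw [hK]
            simp only [Finset.sum_mul]
            try exact Finset.sum_congr rfl fun c _ => by ring
  -- S2
  have hS2 : (∑ c, ∑ d, Ff θ γ2 p c d * Gl η x p a b c * ind η x p a' d)
      = ∑ e, Gl η x p a b e * JmK η x θ γ2 p e a' := by
    refine Finset.sum_congr rfl fun c _ => ?_
    rw [JmK_eq p c a', Finset.mul_sum]
    refine Finset.sum_congr rfl fun d _ => ?_
    rw [ind_symm hs p a' d]
    ring
  -- S3
  have hS3 : (∑ c, ∑ d, Ff θ γ2 p c d * ind η x p a c * Gl η x p a' b d)
      = ∑ d, K d * Gl η x p a' b d := by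
    rw [Finset.sum_comm]
    refine Finset.sum_congr rfl fun d _ => ?_
    rw [hK]
    simp only [Finset.sum_mul]
    exact Finset.sum_congr rfl fun c _ => by ring
  rw [hS1, hS2, hS3]
  have hfin : (∑ d, K d * Gl η x p d b a')
      - (∑ d, K d * pd b (fun q => ind η x q d a') p)
      + (∑ d, K d * Gl η x p a' b d) = 0 := by
    rw [← Finset.sum_sub_distrib, ← Finset.sum_add_distrib]
    refine Finset.sum_eq_zero fun d _ => ?_
    have h := metcompat (x := x) (p := p) hs b d a'
    linear_combination K d * h
  linarith
end dev3


section dev4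
variable {n m : ℕ} {η ηi : (Fin m → ℝ) → Fin m → Fin m → ℝ} {x : (Fin n → ℝ) → Fin m → ℝ}
  {θ : (Fin n → ℝ) → Fin n → Fin n → ℝ} {γ2 : (Fin n → ℝ) → ℝ}
  {gi : (Fin n → ℝ) → Fin n → Fin n → ℝ} {p : Fin n → ℝ}

lemma sum_rot2 {a b c : ℕ} (f : Fin a → Fin b → Fin c → ℝ) :
    ∑ i, ∑ j, ∑ k, f i j k = ∑ j, ∑ k, ∑ i, f i j k :=
  (sum_rot f).trans (sum_rot fun k i j => f i j k)

lemma sum_comm4 {a b c d : ℕ} (f : Fin a → Fin b → Fin c → Fin d → ℝ) :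
    ∑ i, ∑ j, ∑ k, ∑ l, f i j k l = ∑ k, ∑ l, ∑ i, ∑ j, f i j k l :=
  calc ∑ i, ∑ j, ∑ k, ∑ l, f i j k l
      = ∑ i, ∑ k, ∑ l, ∑ j, f i j k l :=
        Finset.sum_congr rfl fun i _ => sum_rot2 _
    _ = ∑ k, ∑ l, ∑ i, ∑ j, f i j k l := sum_rot2 _

lemma sum4_factor {mm : ℕ} (X Y : Fin mm → ℝ) (u v : Fin n → Fin mm → ℝ)
    (s : Fin n → Fin n → ℝ) :
    ∑ j, ∑ k, ∑ c, ∑ d, X j * Y k * (s c d * u c j * v d k)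
      = ∑ c, ∑ d, s c d * (∑ j, X j * u c j) * (∑ k, Y k * v d k) := by
  rw [sum_comm4]
  refine Finset.sum_congr rfl fun c _ => Finset.sum_congr rfl fun d _ => ?_
  simp only [Finset.mul_sum, Finset.sum_mul]
  try rw [Finset.sum_comm]
  exact Finset.sum_congr rfl fun j _ => Finset.sum_congr rfl fun k _ => by ring

lemma Xt_eq (cf : (Fin n → ℝ) → Fin n → ℝ) (c : Fin n) :
    ∑ j, low η x (tv x cf) p j * ee x p c j = ∑ a, cf p a * ind η x p c a := by
  unfold low tv ind
  calc ∑ j, (∑ l, η (x p) j l * ∑ a, cf p a * pd a (fun q => x q l) p) * ee x p c j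
      = ∑ j, ∑ l, ∑ a, cf p a * (η (x p) j l * ee x p a l * ee x p c j) := by
        refine Finset.sum_congr rfl fun j _ => ?_
        rw [Finset.sum_mul]
        refine Finset.sum_congr rfl fun l _ => ?_
        rw [Finset.mul_sum, Finset.sum_mul]
        exact Finset.sum_congr rfl fun a _ => by unfold ee; ring
    _ = ∑ a, ∑ j, ∑ l, cf p a * (η (x p) j l * ee x p a l * ee x p c j) := sum_rot _
    _ = ∑ a, cf p a * ∑ i', ∑ j',
          η (x p) i' j' * pd c (fun q => x q i') p * pd a (fun q => x q j') p := by
        refine Finset.sum_congr rfl fun a _ => ?_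
        rw [Finset.mul_sum]
        refine Finset.sum_congr rfl fun i' _ => ?_
        rw [Finset.mul_sum]
        refine Finset.sum_congr rfl fun j' _ => ?_
        unfold ee
        ring

lemma low_expand (cf : (Fin n → ℝ) → Fin n → ℝ) (j : Fin m) :
    low η x (tv x cf) p j = ∑ a, cf p a * (∑ l, η (x p) j l * ee x p a l) := by
  unfold low tv
  calc ∑ l, η (x p) j l * ∑ a, cf p a * pd a (fun q => x q l) p
      = ∑ l, ∑ a, cf p a * (η (x p) j l * ee x p a l) := by
        refine Finset.sum_congr rfl fun l _ => ?_
        rw [Finset.mul_sum]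
        exact Finset.sum_congr rfl fun a _ => by unfold ee; ring
    _ = ∑ a, ∑ l, cf p a * (η (x p) j l * ee x p a l) := Finset.sum_comm
    _ = ∑ a, cf p a * (∑ l, η (x p) j l * ee x p a l) :=
        Finset.sum_congr rfl fun a _ => by rw [Finset.mul_sum]

lemma GXlem (hη : IsMetric η ηi) (hx : SmoothEmb x) (cf : (Fin n → ℝ) → Fin n → ℝ)
    (b c : Fin n) :
    ∑ j, low η x (tv x cf) p j * (pd b (fun q => ee x q c j) p
        + ∑ l, ∑ l', Chr η ηi (x p) j l l' * ee x p b l * ee x p c l')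
      = ∑ a, cf p a * Gl η x p a b c := by
  calc ∑ j, low η x (tv x cf) p j * (pd b (fun q => ee x q c j) p
        + ∑ l, ∑ l', Chr η ηi (x p) j l l' * ee x p b l * ee x p c l')
      = ∑ j, ∑ a, cf p a * ((∑ l, η (x p) j l * ee x p a l)
          * (pd b (fun q => ee x q c j) p
            + ∑ l, ∑ l', Chr η ηi (x p) j l l' * ee x p b l * ee x p c l')) := by
        refine Finset.sum_congr rfl fun j _ => ?_
        rw [low_expand cf j, Finset.sum_mul]
        exact Finset.sum_congr rfl fun a _ => by ring
    _ = ∑ a, ∑ j, cf p a * ((∑ l, η (x p) j l * ee x p a l)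
          * (pd b (fun q => ee x q c j) p
            + ∑ l, ∑ l', Chr η ηi (x p) j l l' * ee x p b l * ee x p c l')) :=
        Finset.sum_comm
    _ = ∑ a, cf p a * Gl η x p a b c := by
        refine Finset.sum_congr rfl fun a _ => ?_
        rw [← gauss hη hx a b c, Finset.mul_sum]

set_option maxHeartbeats 1600000 in
lemma Tb_zero (hη : IsMetric η ηi) (hx : SmoothEmb x) (hakp : IsAKP η x θ γ2 gi)
    (hpar : ∀ p a b c, pd a (fun q => JmK η x θ γ2 q b c) p
      + (∑ d, Chr (fun q => ind η x q) gi p b a d * JmK η x θ γ2 p d c)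
      - (∑ d, Chr (fun q => ind η x q) gi p d a c * JmK η x θ γ2 p b d) = 0)
    (cf df : (Fin n → ℝ) → Fin n → ℝ) (b : Fin n) :
    ∑ j, ∑ k, low η x (tv x cf) p j * low η x (tv x df) p k
      * (pd b (fun q => Dtil x θ γ2 q j k) p
        + (∑ l, ∑ l', Chr η ηi (x p) j l l' * ee x p b l * Dtil x θ γ2 p l' k)
        + (∑ l, ∑ l', Chr η ηi (x p) k l l' * ee x p b l * Dtil x θ γ2 p j l')) = 0 := by
  obtain ⟨hanti, hjac, hθ, hgi, hγ, hpos, hginv, hchar⟩ := hakp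
  have hs := hη.2.1
  -- rearrange inner Chr-sums (contraction in first Dtil slot)
  have hT2inner : ∀ (j k : Fin m),
      (∑ l, ∑ l', Chr η ηi (x p) j l l' * ee x p b l * Dtil x θ γ2 p l' k)
        = ∑ c, ∑ d, Ff θ γ2 p c d
            * (∑ l, ∑ l', Chr η ηi (x p) j l l' * ee x p b l * ee x p c l')
            * ee x p d k := by
    intro j k
    calc (∑ l, ∑ l', Chr η ηi (x p) j l l' * ee x p b l * Dtil x θ γ2 p l' k)
        = ∑ l, ∑ l', ∑ c, ∑ d, Ff θ γ2 p c d
            * (Chr η ηi (x p) j l l' * ee x p b l * ee x p c l') * ee x p d k := by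
          refine Finset.sum_congr rfl fun l _ => Finset.sum_congr rfl fun l' _ => ?_
          rw [Dtil_eq p l' k, Finset.mul_sum]
          refine Finset.sum_congr rfl fun c _ => ?_
          rw [Finset.mul_sum]
          exact Finset.sum_congr rfl fun d _ => by ring
      _ = ∑ c, ∑ d, ∑ l, ∑ l', Ff θ γ2 p c d
            * (Chr η ηi (x p) j l l' * ee x p b l * ee x p c l') * ee x p d k :=
          sum_comm4 _
      _ = ∑ c, ∑ d, Ff θ γ2 p c d
            * (∑ l, ∑ l', Chr η ηi (x p) j l l' * ee x p b l * ee x p c l')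
            * ee x p d k := by
          refine Finset.sum_congr rfl fun c _ => Finset.sum_congr rfl fun d _ => ?_
          simp only [Finset.sum_mul, Finset.mul_sum]
  -- contraction in second Dtil slot
  have hT3inner : ∀ (j k : Fin m),
      (∑ l, ∑ l', Chr η ηi (x p) k l l' * ee x p b l * Dtil x θ γ2 p j l')
        = ∑ c, ∑ d, Ff θ γ2 p c d * ee x p c j
            * (∑ l, ∑ l', Chr η ηi (x p) k l l' * ee x p b l * ee x p d l') := by
    intro j k
    calc (∑ l, ∑ l', Chr η ηi (x p) k l l' * ee x p b l * Dtil x θ γ2 p j l')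
        = ∑ l, ∑ l', ∑ c, ∑ d, Ff θ γ2 p c d * ee x p c j
            * (Chr η ηi (x p) k l l' * ee x p b l * ee x p d l') := by
          refine Finset.sum_congr rfl fun l _ => Finset.sum_congr rfl fun l' _ => ?_
          rw [Dtil_eq p j l', Finset.mul_sum]
          refine Finset.sum_congr rfl fun c _ => ?_
          rw [Finset.mul_sum]
          exact Finset.sum_congr rfl fun d _ => by ring
      _ = ∑ c, ∑ d, ∑ l, ∑ l', Ff θ γ2 p c d * ee x p c j
            * (Chr η ηi (x p) k l l' * ee x p b l * ee x p d l') :=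
          sum_comm4 _
      _ = ∑ c, ∑ d, Ff θ γ2 p c d * ee x p c j
            * (∑ l, ∑ l', Chr η ηi (x p) k l l' * ee x p b l * ee x p d l') := by
          refine Finset.sum_congr rfl fun c _ => Finset.sum_congr rfl fun d _ => ?_
          simp only [Finset.sum_mul, Finset.mul_sum]
  -- main rearrangement
  have hmain : ∑ j, ∑ k, low η x (tv x cf) p j * low η x (tv x df) p k
      * (pd b (fun q => Dtil x θ γ2 q j k) p
        + (∑ l, ∑ l', Chr η ηi (x p) j l l' * ee x p b l * Dtil x θ γ2 p l' k)
        + (∑ l, ∑ l', Chr η ηi (x p) k l l' * ee x p b l * Dtil x θ γ2 p j l'))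
      = (∑ c, ∑ d, pd b (fun q => Ff θ γ2 q c d) p
            * (∑ j, low η x (tv x cf) p j * ee x p c j)
            * (∑ k, low η x (tv x df) p k * ee x p d k))
        + (∑ c, ∑ d, Ff θ γ2 p c d
            * (∑ j, low η x (tv x cf) p j * (pd b (fun q => ee x q c j) p
                + ∑ l, ∑ l', Chr η ηi (x p) j l l' * ee x p b l * ee x p c l'))
            * (∑ k, low η x (tv x df) p k * ee x p d k))
        + (∑ c, ∑ d, Ff θ γ2 p c d
            * (∑ j, low η x (tv x cf) p j * ee x p c j)
            * (∑ k, low η x (tv x df) p k * (pd b (fun q => ee x q d k) p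
                + ∑ l, ∑ l', Chr η ηi (x p) k l l' * ee x p b l * ee x p d l'))) := by
    calc ∑ j, ∑ k, low η x (tv x cf) p j * low η x (tv x df) p k
        * (pd b (fun q => Dtil x θ γ2 q j k) p
          + (∑ l, ∑ l', Chr η ηi (x p) j l l' * ee x p b l * Dtil x θ γ2 p l' k)
          + (∑ l, ∑ l', Chr η ηi (x p) k l l' * ee x p b l * Dtil x θ γ2 p j l'))
        = (∑ j, ∑ k, ∑ c, ∑ d, low η x (tv x cf) p j * low η x (tv x df) p k
            * (pd b (fun q => Ff θ γ2 q c d) p * ee x p c j * ee x p d k))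
          + ((∑ j, ∑ k, ∑ c, ∑ d, low η x (tv x cf) p j * low η x (tv x df) p k
            * (Ff θ γ2 p c d * (pd b (fun q => ee x q c j) p
                + ∑ l, ∑ l', Chr η ηi (x p) j l l' * ee x p b l * ee x p c l')
              * ee x p d k))
          + (∑ j, ∑ k, ∑ c, ∑ d, low η x (tv x cf) p j * low η x (tv x df) p k
            * (Ff θ γ2 p c d * ee x p c j
              * (pd b (fun q => ee x q d k) p
                + ∑ l, ∑ l', Chr η ηi (x p) k l l' * ee x p b l * ee x p d l')))) := by
          simp only [← Finset.sum_add_distrib]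
          refine Finset.sum_congr rfl fun j _ => Finset.sum_congr rfl fun k _ => ?_
          rw [pd_Dtil hx hθ hγ hpos b j k, hT2inner j k, hT3inner j k]
          simp only [mul_add, Finset.mul_sum, ← Finset.sum_add_distrib]
          exact Finset.sum_congr rfl fun c _ => Finset.sum_congr rfl fun d _ => by ring
      _ = _ := by
          rw [sum4_factor (fun j => low η x (tv x cf) p j) (fun k => low η x (tv x df) p k)
              (fun c j => ee x p c j) (fun d k => ee x p d k)
              (fun c d => pd b (fun q => Ff θ γ2 q c d) p),
            sum4_factor (fun j => low η x (tv x cf) p j) (fun k => low η x (tv x df) p k)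
              (fun c j => pd b (fun q => ee x q c j) p
                + ∑ l, ∑ l', Chr η ηi (x p) j l l' * ee x p b l * ee x p c l')
              (fun d k => ee x p d k)
              (fun c d => Ff θ γ2 p c d),
            sum4_factor (fun j => low η x (tv x cf) p j) (fun k => low η x (tv x df) p k)
              (fun c j => ee x p c j)
              (fun d k => pd b (fun q => ee x q d k) p
                + ∑ l, ∑ l', Chr η ηi (x p) k l l' * ee x p b l * ee x p d l')
              (fun c d => Ff θ γ2 p c d)]
          ring
  rw [hmain]
  -- substitute Gauss and Xt
  have hGX : ∀ c : Fin n, (∑ j, low η x (tv x cf) p j * (pd b (fun q => ee x q c j) p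
      + ∑ l, ∑ l', Chr η ηi (x p) j l l' * ee x p b l * ee x p c l'))
      = ∑ a, cf p a * Gl η x p a b c := GXlem hη hx cf b
  have hGY : ∀ d : Fin n, (∑ k, low η x (tv x df) p k * (pd b (fun q => ee x q d k) p
      + ∑ l, ∑ l', Chr η ηi (x p) k l l' * ee x p b l * ee x p d l'))
      = ∑ a, df p a * Gl η x p a b d := GXlem hη hx df b
  have hXt : ∀ c : Fin n, (∑ j, low η x (tv x cf) p j * ee x p c j)
      = ∑ a, cf p a * ind η x p a c := by
    intro c
    rw [Xt_eq cf c]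
    exact Finset.sum_congr rfl fun a _ => by rw [ind_symm hs p c a]
  have hYt : ∀ d : Fin n, (∑ k, low η x (tv x df) p k * ee x p d k)
      = ∑ a', df p a' * ind η x p a' d := by
    intro d
    rw [Xt_eq df d]
    exact Finset.sum_congr rfl fun a' _ => by rw [ind_symm hs p d a']
  simp only [hGX, hGY, hXt, hYt]
  -- final contraction with keyE
  have hkey := keyE (η := η) (ηi := ηi) (gi := gi) (p := p) hη hx
    ⟨hanti, hjac, hθ, hgi, hγ, hpos, hginv, hchar⟩ hpar b
  calc (∑ c, ∑ d, pd b (fun q => Ff θ γ2 q c d) p * (∑ a, cf p a * ind η x p a c)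
          * (∑ a', df p a' * ind η x p a' d))
        + (∑ c, ∑ d, Ff θ γ2 p c d * (∑ a, cf p a * Gl η x p a b c)
          * (∑ a', df p a' * ind η x p a' d))
        + (∑ c, ∑ d, Ff θ γ2 p c d * (∑ a, cf p a * ind η x p a c)
          * (∑ a, df p a * Gl η x p a b d))
      = ∑ c, ∑ d, ∑ a, ∑ a', cf p a * df p a'
          * (pd b (fun q => Ff θ γ2 q c d) p * ind η x p a c * ind η x p a' d
            + Ff θ γ2 p c d * Gl η x p a b c * ind η x p a' d
            + Ff θ γ2 p c d * ind η x p a c * Gl η x p a' b d) := by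
        simp only [← Finset.sum_add_distrib]
        refine Finset.sum_congr rfl fun c _ => Finset.sum_congr rfl fun d _ => ?_
        simp only [Finset.sum_mul, Finset.mul_sum, ← Finset.sum_add_distrib]
        rw [Finset.sum_comm]
        exact Finset.sum_congr rfl fun a _ => Finset.sum_congr rfl fun a' _ => by ring
    _ = ∑ a, ∑ a', cf p a * df p a'
          * ∑ c, ∑ d, (pd b (fun q => Ff θ γ2 q c d) p * ind η x p a c * ind η x p a' d
            + Ff θ γ2 p c d * Gl η x p a b c * ind η x p a' d
            + Ff θ γ2 p c d * ind η x p a c * Gl η x p a' b d) := by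
        rw [sum_comm4]
        refine Finset.sum_congr rfl fun a _ => Finset.sum_congr rfl fun a' _ => ?_
        rw [Finset.mul_sum]
        exact Finset.sum_congr rfl fun c _ => by rw [Finset.mul_sum]
    _ = 0 := by
        refine Finset.sum_eq_zero fun a _ => Finset.sum_eq_zero fun a' _ => ?_
        rw [hkey a a', mul_zero]
end dev4


section dev5
variable {n m : ℕ} {η ηi : (Fin m → ℝ) → Fin m → Fin m → ℝ} {x : (Fin n → ℝ) → Fin m → ℝ}
  {θ : (Fin n → ℝ) → Fin n → Fin n → ℝ} {γ2 : (Fin n → ℝ) → ℝ}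
  {gi : (Fin n → ℝ) → Fin n → Fin n → ℝ} {p : Fin n → ℝ}

lemma DtopS_eq (u : (Fin n → ℝ) → ℝ) (i : Fin m) :
    DtopS x θ γ2 u p i = ∑ a, ∑ b, Ff θ γ2 p a b * ee x p a i * pd b u p := by
  unfold DtopS pbr
  rw [Finset.mul_sum]
  refine Finset.sum_congr rfl fun a _ => ?_
  rw [Finset.mul_sum]
  refine Finset.sum_congr rfl fun b _ => ?_
  unfold Ff ee
  ring

lemma contract1 (i : Fin m) (V : Fin m → Fin m → ℝ) (W : Fin m → ℝ) :
    ∑ l, ∑ l', Dtil x θ γ2 p i l * V l l' * W l'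
      = ∑ a, ∑ b, Ff θ γ2 p a b * ee x p a i
          * (∑ l, ∑ l', V l l' * ee x p b l * W l') := by
  calc ∑ l, ∑ l', Dtil x θ γ2 p i l * V l l' * W l'
      = ∑ l, ∑ l', ∑ a, ∑ b, Ff θ γ2 p a b * ee x p a i
          * (V l l' * ee x p b l * W l') := by
        refine Finset.sum_congr rfl fun l _ => Finset.sum_congr rfl fun l' _ => ?_
        rw [Dtil_eq p i l, Finset.sum_mul, Finset.sum_mul]
        refine Finset.sum_congr rfl fun a _ => ?_
        rw [Finset.sum_mul, Finset.sum_mul]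
        exact Finset.sum_congr rfl fun b _ => by ring
    _ = ∑ a, ∑ b, ∑ l, ∑ l', Ff θ γ2 p a b * ee x p a i
          * (V l l' * ee x p b l * W l') := sum_comm4 _
    _ = ∑ a, ∑ b, Ff θ γ2 p a b * ee x p a i
          * (∑ l, ∑ l', V l l' * ee x p b l * W l') := by
        refine Finset.sum_congr rfl fun a _ => Finset.sum_congr rfl fun b _ => ?_
        simp only [Finset.mul_sum]

end dev5

/-- If `(Σ, g, J)` is Kähler with respect to `J = γ^{-1}θ`
(`J` parallel and integrable), then for any tangent `X, Y` (coefficients `c, d`),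
`X_j Y_k (∇̃^i D̃^{jk}) = 0` where `D̃^{ik} = γ^{-1}{x^i,x^k}` and `∇̃^i = D̃^{ik} ∇̄_k`. -/
theorem statement_11 {n m : ℕ}
    (η ηi : (Fin m → ℝ) → Fin m → Fin m → ℝ) (x : (Fin n → ℝ) → Fin m → ℝ)
    (θ : (Fin n → ℝ) → Fin n → Fin n → ℝ) (γ2 : (Fin n → ℝ) → ℝ)
    (gi : (Fin n → ℝ) → Fin n → Fin n → ℝ)
    (hη : IsMetric η ηi) (hx : SmoothEmb x) (hakp : IsAKP η x θ γ2 gi)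
    (hpar : ∀ p a b c, pd a (fun q => JmK η x θ γ2 q b c) p
      + (∑ d, Chr (fun q => ind η x q) gi p b a d * JmK η x θ γ2 p d c)
      - (∑ d, Chr (fun q => ind η x q) gi p d a c * JmK η x θ γ2 p b d) = 0)
    (hnij : ∀ p a b c, (∑ d, (JmK η x θ γ2 p d b * pd d (fun q => JmK η x θ γ2 q a c) p
      - JmK η x θ γ2 p d c * pd d (fun q => JmK η x θ γ2 q a b) p
      - JmK η x θ γ2 p a d * pd b (fun q => JmK η x θ γ2 q d c) p
      + JmK η x θ γ2 p a d * pd c (fun q => JmK η x θ γ2 q d b) p)) = 0) :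
    ∀ (c d : (Fin n → ℝ) → Fin n → ℝ) (p : Fin n → ℝ) (i : Fin m),
      (∑ j, ∑ k, low η x (tv x c) p j * low η x (tv x d) p k
          * nhT2til η ηi x θ γ2 (fun q => Dtil x θ γ2 q) p i j k) = 0 := by
  intro cf df p i
  have hnh : ∀ j k : Fin m, nhT2til η ηi x θ γ2 (fun q => Dtil x θ γ2 q) p i j k
      = ∑ a, ∑ b, Ff θ γ2 p a b * ee x p a i
          * (pd b (fun q => Dtil x θ γ2 q j k) p
            + (∑ l, ∑ l', Chr η ηi (x p) j l l' * ee x p b l * Dtil x θ γ2 p l' k)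
            + (∑ l, ∑ l', Chr η ηi (x p) k l l' * ee x p b l * Dtil x θ γ2 p j l')) := by
    intro j k
    unfold nhT2til
    rw [DtopS_eq,
      contract1 i (fun l l' => Chr η ηi (x p) j l l') (fun l' => Dtil x θ γ2 p l' k),
      contract1 i (fun l l' => Chr η ηi (x p) k l l') (fun l' => Dtil x θ γ2 p j l')]
    simp only [← Finset.sum_add_distrib]
    refine Finset.sum_congr rfl fun a _ => Finset.sum_congr rfl fun b _ => by ring
  calc (∑ j, ∑ k, low η x (tv x cf) p j * low η x (tv x df) p k
          * nhT2til η ηi x θ γ2 (fun q => Dtil x θ γ2 q) p i j k)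
      = ∑ j, ∑ k, ∑ a, ∑ b, low η x (tv x cf) p j * low η x (tv x df) p k
          * (Ff θ γ2 p a b * ee x p a i
            * (pd b (fun q => Dtil x θ γ2 q j k) p
              + (∑ l, ∑ l', Chr η ηi (x p) j l l' * ee x p b l * Dtil x θ γ2 p l' k)
              + (∑ l, ∑ l', Chr η ηi (x p) k l l' * ee x p b l * Dtil x θ γ2 p j l'))) := by
        refine Finset.sum_congr rfl fun j _ => Finset.sum_congr rfl fun k _ => ?_
        rw [hnh j k, Finset.mul_sum]
        refine Finset.sum_congr rfl fun a _ => ?_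
        rw [Finset.mul_sum]
    _ = ∑ a, ∑ b, ∑ j, ∑ k, low η x (tv x cf) p j * low η x (tv x df) p k
          * (Ff θ γ2 p a b * ee x p a i
            * (pd b (fun q => Dtil x θ γ2 q j k) p
              + (∑ l, ∑ l', Chr η ηi (x p) j l l' * ee x p b l * Dtil x θ γ2 p l' k)
              + (∑ l, ∑ l', Chr η ηi (x p) k l l' * ee x p b l * Dtil x θ γ2 p j l'))) :=
        sum_comm4 _
    _ = ∑ a, ∑ b, Ff θ γ2 p a b * ee x p a i
          * (∑ j, ∑ k, low η x (tv x cf) p j * low η x (tv x df) p k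
            * (pd b (fun q => Dtil x θ γ2 q j k) p
              + (∑ l, ∑ l', Chr η ηi (x p) j l l' * ee x p b l * Dtil x θ γ2 p l' k)
              + (∑ l, ∑ l', Chr η ηi (x p) k l l' * ee x p b l * Dtil x θ γ2 p j l'))) := by
        refine Finset.sum_congr rfl fun a _ => Finset.sum_congr rfl fun b _ => ?_
        simp only [Finset.mul_sum]
        exact Finset.sum_congr rfl fun j _ => Finset.sum_congr rfl fun k _ => by ring
    _ = 0 := by
        refine Finset.sum_eq_zero fun a _ => Finset.sum_eq_zero fun b _ => ?_
        rw [Tb_zero hη hx hakp hpar cf df b, mul_zero]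

end KP
end
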